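/- arXiv:1812.07384 — 7 statements merged into one kernel-verified Lean document; each statement's English description precedes it below -/
import Mathlib

section
/- Let P be an n×n real invertible matrix with largest singular value δ₁ and smallest singular value δₙ. For any vectors v₁,…,v_k ∈ ℝⁿ, the k-dimensional volume V_b of the parallelotope spanned by Pv₁,…,Pv_k and the volume V_a of the parallelotope spanned by v₁,…,v_k satisfy δₙ^k · V_a ≤ V_b ≤ δ₁^k · V_a. -/
open Matrix

/-- The `k`-dimensional volume of the parallelotope spanned by `w 0, …, w (k-1)` in `ℝⁿ`:
the square root of the Gram determinant. -/
noncomputable def gramVol {n k : ℕ} (w : Fin k → (Fin n → ℝ)) : ℝ :=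
  Real.sqrt (Matrix.det (Matrix.of fun i j => dotProduct (w i) (w j)))


private lemma sqrtPow (c : ℝ) (hc : 0 ≤ c) (k : ℕ) :
    Real.sqrt (c ^ k) = Real.sqrt c ^ k := by
  rw [show c ^ k = (Real.sqrt c ^ k) ^ 2 by
        rw [← pow_mul, mul_comm, pow_mul, Real.sq_sqrt hc],
      Real.sqrt_sq (pow_nonneg (Real.sqrt_nonneg c) k)]

private lemma psdDetNonneg {m : Type*} [Fintype m] [DecidableEq m]
    {A : Matrix m m ℝ} (hA : A.PosSemidef) : 0 ≤ A.det := by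
  rw [hA.1.det_eq_prod_eigenvalues]
  exact Finset.prod_nonneg fun i _ => by simpa using hA.eigenvalues_nonneg i

private lemma posDefOfPsdUnit {m : Type*} [Fintype m] [DecidableEq m]
    {M : Matrix m m ℝ} (hM : M.PosSemidef) (h : IsUnit M.det) : M.PosDef := by
  refine posDef_iff_dotProduct_mulVec.mpr ⟨hM.1, fun x hx => ?_⟩
  rcases lt_or_eq_of_le (hM.dotProduct_mulVec_nonneg x) with h' | h'
  · exact h'
  · exfalso
    have hMx : M *ᵥ x = 0 := (hM.dotProduct_mulVec_zero_iff x).1 h'.symm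
    apply hx
    have := congrArg (fun y => M⁻¹ *ᵥ y) hMx
    simpa [Matrix.mulVec_mulVec, Matrix.nonsing_inv_mul _ h] using this

private lemma eigLeOne {m : Type*} [Fintype m] [DecidableEq m]
    {M : Matrix m m ℝ} (hM : M.PosSemidef) (h1 : (1 - M).PosSemidef) (i : m) :
    hM.1.eigenvalues i ≤ 1 := by
  set v : m → ℝ := ⇑(hM.1.eigenvectorBasis i) with hv
  have hmv : M *ᵥ v = hM.1.eigenvalues i • v := hM.1.mulVec_eigenvectorBasis i
  have hnorm : v ⬝ᵥ v = 1 := by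
    have h2 : ‖hM.1.eigenvectorBasis i‖ = 1 := hM.1.eigenvectorBasis.orthonormal.1 i
    have h3 : (inner ℝ (hM.1.eigenvectorBasis i) (hM.1.eigenvectorBasis i) : ℝ)
        = ‖hM.1.eigenvectorBasis i‖ * ‖hM.1.eigenvectorBasis i‖ :=
      real_inner_self_eq_norm_mul_norm _
    rw [h2, mul_one] at h3
    rw [← h3]
    simp [PiLp.inner_apply, dotProduct, hv, mul_comm]
    rw [EuclideanSpace.inner_eq_star_dotProduct, star_trivial] at h3
    simpa only [dotProduct] using h3
  have h4 := h1.dotProduct_mulVec_nonneg v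
  rw [Matrix.sub_mulVec, Matrix.one_mulVec, dotProduct_sub, hmv, dotProduct_smul,
    star_trivial, hnorm] at h4
  simpa using h4

open scoped MatrixOrder in
private lemma detMono {m : Type*} [Fintype m] [DecidableEq m]
    {A B : Matrix m m ℝ} (hA : A.PosSemidef) (hBA : (B - A).PosSemidef) :
    A.det ≤ B.det := by
  have hB : B.PosSemidef := by simpa using hBA.add hA
  by_cases hdet : IsUnit B.det
  · have hBpd : B.PosDef := posDefOfPsdUnit hB hdet
    set S := CFC.sqrt B with hS
    have hSpsd : S.PosSemidef := (CFC.sqrt_nonneg B).posSemidef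
    have hSS : S * S = B := CFC.sqrt_mul_sqrt_self B hB.nonneg
    have hSunit : IsUnit S.det := by
      have : S.det * S.det = B.det := by rw [← Matrix.det_mul, hSS]
      exact isUnit_of_mul_isUnit_left (this ▸ hdet)
    have hSH : Sᴴ = S := hSpsd.1
    have hSiH : (S⁻¹)ᴴ = S⁻¹ := by rw [Matrix.conjTranspose_nonsing_inv, hSH]
    set M := S⁻¹ * A * S⁻¹ with hM
    have hMpsd : M.PosSemidef := by
      have := hA.conjTranspose_mul_mul_same S⁻¹
      rwa [hSiH] at this
    have hSBS : S⁻¹ * B * S⁻¹ = 1 := by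
      rw [← hSS, ← mul_assoc, Matrix.nonsing_inv_mul _ hSunit, one_mul,
        Matrix.mul_nonsing_inv _ hSunit]
    have h1M : (1 - M).PosSemidef := by
      have h := hBA.conjTranspose_mul_mul_same S⁻¹
      rw [hSiH] at h
      have heq : S⁻¹ * (B - A) * S⁻¹ = 1 - M := by
        rw [Matrix.mul_sub, Matrix.sub_mul, hSBS, hM]
      rwa [heq] at h
    have hdetM : M.det ≤ 1 := by
      rw [hMpsd.1.det_eq_prod_eigenvalues]
      calc (∏ i, (hMpsd.1.eigenvalues i : ℝ)) ≤ ∏ _i : m, (1:ℝ) := by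
            refine Finset.prod_le_prod (fun i _ => by simpa using hMpsd.eigenvalues_nonneg i)
              (fun i _ => ?_)
            simpa using eigLeOne hMpsd h1M i
        _ = 1 := by simp
    have hAeq : A = S * M * S := by
      rw [hM, ← mul_assoc, ← mul_assoc, Matrix.mul_nonsing_inv _ hSunit, one_mul,
        mul_assoc, Matrix.nonsing_inv_mul _ hSunit, mul_one]
    have hdetB : B.det = S.det * S.det := by rw [← Matrix.det_mul, hSS]
    have hSdnn : 0 ≤ S.det := psdDetNonneg hSpsd
    calc A.det = S.det * M.det * S.det := by rw [hAeq, Matrix.det_mul, Matrix.det_mul]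
      _ ≤ S.det * 1 * S.det := by
          apply mul_le_mul_of_nonneg_right _ hSdnn
          exact mul_le_mul_of_nonneg_left hdetM hSdnn
      _ = B.det := by rw [mul_one, hdetB]
  · have hBdet : B.det = 0 := by
      simpa [isUnit_iff_ne_zero] using hdet
    obtain ⟨x, hx0, hBx⟩ := (Matrix.exists_mulVec_eq_zero_iff (M := B)).2 hBdet
    have hxAx : x ⬝ᵥ A *ᵥ x = 0 := by
      have h1 : (0:ℝ) ≤ x ⬝ᵥ A *ᵥ x := by simpa using hA.dotProduct_mulVec_nonneg x
      have h2 : (0:ℝ) ≤ x ⬝ᵥ (B - A) *ᵥ x := by simpa using hBA.dotProduct_mulVec_nonneg x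
      rw [Matrix.sub_mulVec, dotProduct_sub, hBx, dotProduct_zero] at h2
      linarith
    have hAx : A *ᵥ x = 0 := (hA.dotProduct_mulVec_zero_iff x).1 (by simpa using hxAx)
    have hAdet : A.det = 0 := (Matrix.exists_mulVec_eq_zero_iff).1 ⟨x, hx0, hAx⟩
    rw [hAdet, hBdet]


private lemma psdConj {n : ℕ} (V : Matrix (Fin n) (Fin n) ℝ) {e : Fin n → ℝ}
    (he : ∀ i, 0 ≤ e i) : (V * diagonal e * Vᴴ).PosSemidef :=
  (Matrix.posSemidef_diagonal_iff.mpr fun i => he i).mul_mul_conjTranspose_same V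

section helpers
variable {n : ℕ} {V : Matrix (Fin n) (Fin n) ℝ}

private lemma conjDiagMul (hV : Vᴴ * V = 1) (e f : Fin n → ℝ) :
    (V * diagonal e * Vᴴ) * (V * diagonal f * Vᴴ)
      = V * diagonal (fun i => e i * f i) * Vᴴ := by
  rw [Matrix.mul_assoc (V * diagonal e), ← Matrix.mul_assoc Vᴴ, ← Matrix.mul_assoc Vᴴ, hV,
    one_mul, ← Matrix.mul_assoc, Matrix.mul_assoc V, diagonal_mul_diagonal]

private lemma smulConj (c : ℝ) (e : Fin n → ℝ) :
    c • (V * diagonal e * Vᴴ) = V * diagonal (fun i => c * e i) * Vᴴ := by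
  rw [← smul_mul_assoc, ← mul_smul_comm, ← Matrix.diagonal_smul]
  congr 1

end helpers

/-- For an invertible real matrix `P` with largest singular value `δ₁` and smallest singular
value `δₙ` (square roots of the extreme eigenvalues of `P Pᵀ`), the `k`-dimensional volume of the
parallelotope spanned by `P v₁, …, P v_k` is between `δₙ^k` and `δ₁^k` times the volume of the
parallelotope spanned by `v₁, …, v_k`. -/
theorem volume_bounds_of_singular_values (n k : ℕ) (P : Matrix (Fin n) (Fin n) ℝ)
    (hP : IsUnit P.det) (hherm : (P * Pᵀ).IsHermitian) (δ1 δn : ℝ)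
    (hδ1 : δ1 = Real.sqrt (⨆ i, hherm.eigenvalues i))
    (hδn : δn = Real.sqrt (⨅ i, hherm.eigenvalues i))
    (v : Fin k → (Fin n → ℝ)) :
    δn ^ k * gramVol v ≤ gramVol (fun i => P.mulVec (v i)) ∧
      gramVol (fun i => P.mulVec (v i)) ≤ δ1 ^ k * gramVol v := by
  have hPt : Pᴴ = Pᵀ := Matrix.conjTranspose_eq_transpose_of_trivial P
  have hApsd : (P * Pᵀ).PosSemidef := by
    have := Matrix.posSemidef_self_mul_conjTranspose P
    rwa [hPt] at this
  have hPdet : IsUnit (P * Pᵀ).det := by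
    rw [Matrix.det_mul, Matrix.det_transpose]; exact hP.mul hP
  have hApd : (P * Pᵀ).PosDef := posDefOfPsdUnit hApsd hPdet
  set d : Fin n → ℝ := hherm.eigenvalues with hd
  have hd_pos : ∀ i, 0 < d i := fun i => hApd.eigenvalues_pos i
  set c : ℝ := ⨅ i, d i with hc
  set C : ℝ := ⨆ i, d i with hC
  have hc_le : ∀ i, c ≤ d i := fun i => ciInf_le (Finite.bddBelow_range _) i
  have hC_ge : ∀ i, d i ≤ C := fun i => le_ciSup (Finite.bddAbove_range _) i
  have hc0 : 0 ≤ c := Real.iInf_nonneg fun i => (hd_pos i).le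
  have hC0 : 0 ≤ C := Real.iSup_nonneg fun i => (hd_pos i).le
  set V : Matrix (Fin n) (Fin n) ℝ := ↑(hherm.eigenvectorUnitary) with hV
  have hVV : V * Vᴴ = 1 := by
    rw [← Matrix.star_eq_conjTranspose]
    exact (Matrix.mem_unitaryGroup_iff).mp hherm.eigenvectorUnitary.2
  have hVV' : Vᴴ * V = 1 := by
    rw [← Matrix.star_eq_conjTranspose]
    exact (Matrix.mem_unitaryGroup_iff').mp hherm.eigenvectorUnitary.2
  have hsp : P * Pᵀ = V * diagonal d * Vᴴ := by
    have h := hherm.spectral_theorem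
    have hco : (RCLike.ofReal ∘ hherm.eigenvalues : Fin n → ℝ) = d := rfl
    rw [hco] at h
    simpa [Matrix.star_eq_conjTranspose, ← hV] using h
  have hAinv : (P * Pᵀ)⁻¹ = V * diagonal (fun i => (d i)⁻¹) * Vᴴ := by
    apply Matrix.inv_eq_right_inv
    rw [hsp, conjDiagMul hVV' d]
    have : (fun i => d i * (d i)⁻¹) = fun _ : Fin n => (1 : ℝ) :=
      funext fun i => mul_inv_cancel₀ (hd_pos i).ne'
    rw [this, Matrix.diagonal_one, mul_one, hVV]
  have hone : (1 : Matrix (Fin n) (Fin n) ℝ) = V * diagonal (fun _ => (1:ℝ)) * Vᴴ := by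
    rw [Matrix.diagonal_one, mul_one, hVV]
  -- the two sandwiched PSD matrices
  have hlow : (1 - c • (P * Pᵀ)⁻¹) = V * diagonal (fun i => 1 - c * (d i)⁻¹) * Vᴴ := by
    rw [hAinv, smulConj, hone]
    rw [← Matrix.sub_mul, ← Matrix.mul_sub, Matrix.diagonal_sub]
  have hupp : (C • (P * Pᵀ)⁻¹ - 1) = V * diagonal (fun i => C * (d i)⁻¹ - 1) * Vᴴ := by
    rw [hAinv, smulConj, hone]
    rw [← Matrix.sub_mul, ← Matrix.mul_sub, Matrix.diagonal_sub]
  have hlow_psd : (1 - c • (P * Pᵀ)⁻¹).PosSemidef := by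
    rw [hlow]
    refine psdConj V fun i => ?_
    rw [sub_nonneg]
    calc c * (d i)⁻¹ ≤ d i * (d i)⁻¹ :=
          mul_le_mul_of_nonneg_right (hc_le i) (inv_nonneg.mpr (hd_pos i).le)
      _ = 1 := mul_inv_cancel₀ (hd_pos i).ne'
  have hupp_psd : (C • (P * Pᵀ)⁻¹ - 1).PosSemidef := by
    rw [hupp]
    refine psdConj V fun i => ?_
    rw [sub_nonneg]
    calc (1:ℝ) = d i * (d i)⁻¹ := (mul_inv_cancel₀ (hd_pos i).ne').symm
      _ ≤ C * (d i)⁻¹ :=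
          mul_le_mul_of_nonneg_right (hC_ge i) (inv_nonneg.mpr (hd_pos i).le)
  -- Gram matrices
  set Va : Matrix (Fin k) (Fin n) ℝ := Matrix.of v with hVa
  set W : Matrix (Fin k) (Fin n) ℝ := Va * Pᵀ with hW
  have hWt : Wᴴ = Wᵀ := Matrix.conjTranspose_eq_transpose_of_trivial W
  have hWapp : ∀ i m, W i m = (P *ᵥ v i) m := by
    intro i m
    simp [hW, hVa, Matrix.mul_apply, Matrix.mulVec, dotProduct, mul_comm]
  have hGa : (Matrix.of fun i j => dotProduct (v i) (v j)) = Va * Vaᵀ := by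
    ext i j
    simp [hVa, Matrix.mul_apply, dotProduct]
  have hGb : (Matrix.of fun i j => dotProduct (P *ᵥ v i) (P *ᵥ v j)) = W * Wᵀ := by
    ext i j
    simp [Matrix.mul_apply, dotProduct, hWapp]
  have hGaW : Va * Vaᵀ = W * (P * Pᵀ)⁻¹ * Wᵀ := by
    rw [Matrix.mul_inv_rev, hW, Matrix.transpose_mul, Matrix.transpose_transpose]
    have hPt_unit : IsUnit Pᵀ.det := by rwa [Matrix.det_transpose]
    calc Va * Vaᵀ = Va * ((Pᵀ * Pᵀ⁻¹) * ((P⁻¹ * P) * Vaᵀ)) := by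
          rw [Matrix.mul_nonsing_inv _ hPt_unit, Matrix.nonsing_inv_mul _ hP, Matrix.one_mul, Matrix.one_mul]
      _ = Va * Pᵀ * (Pᵀ⁻¹ * P⁻¹) * (P * Vaᵀ) := by
          simp only [Matrix.mul_assoc]
  -- determinant inequalities
  have hWWpsd : (W * Wᵀ).PosSemidef := by
    have := Matrix.posSemidef_self_mul_conjTranspose W
    rwa [hWt] at this
  have hGaPsd : (Va * Vaᵀ).PosSemidef := by
    have := Matrix.posSemidef_self_mul_conjTranspose Va
    rwa [Matrix.conjTranspose_eq_transpose_of_trivial] at this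
  have hsandwich : ∀ (X : Matrix (Fin n) (Fin n) ℝ), X.PosSemidef → (W * X * Wᵀ).PosSemidef := by
    intro X hX
    have := hX.mul_mul_conjTranspose_same W
    rwa [hWt] at this
  have hdiff_low : (W * Wᵀ - c • (Va * Vaᵀ)) = W * (1 - c • (P * Pᵀ)⁻¹) * Wᵀ := by
    rw [hGaW, Matrix.mul_sub, Matrix.sub_mul, Matrix.mul_one]
    congr 1
    rw [← Matrix.smul_mul, ← Matrix.mul_smul]
  have hdiff_upp : (C • (Va * Vaᵀ) - W * Wᵀ) = W * (C • (P * Pᵀ)⁻¹ - 1) * Wᵀ := by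
    rw [hGaW, Matrix.mul_sub, Matrix.sub_mul, Matrix.mul_one]
    congr 1
    rw [← Matrix.smul_mul, ← Matrix.mul_smul]
  have hcGaPsd : (c • (Va * Vaᵀ)).PosSemidef := by
    rw [hGaW, ← Matrix.smul_mul, ← Matrix.mul_smul, hAinv, smulConj]
    exact hsandwich _ (psdConj V fun i => mul_nonneg hc0 (inv_nonneg.mpr (hd_pos i).le))
  have hdet_low : c ^ k * (Va * Vaᵀ).det ≤ (W * Wᵀ).det := by
    have := detMono hcGaPsd (by rw [hdiff_low]; exact hsandwich _ hlow_psd)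
    rwa [Matrix.det_smul, Fintype.card_fin] at this
  have hdet_upp : (W * Wᵀ).det ≤ C ^ k * (Va * Vaᵀ).det := by
    have := detMono hWWpsd (by rw [hdiff_upp]; exact hsandwich _ hupp_psd)
    rwa [Matrix.det_smul, Fintype.card_fin] at this
  have hGadet0 : 0 ≤ (Va * Vaᵀ).det := psdDetNonneg hGaPsd
  -- conclude
  have hgv : gramVol v = Real.sqrt (Va * Vaᵀ).det := by rw [gramVol, hGa]
  have hgw : gramVol (fun i => P.mulVec (v i)) = Real.sqrt (W * Wᵀ).det := by
    rw [gramVol, hGb]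
  constructor
  · rw [hδn, hgv, hgw, ← sqrtPow c hc0, ← Real.sqrt_mul (pow_nonneg hc0 k)]
    exact Real.sqrt_le_sqrt hdet_low
  · rw [hδ1, hgv, hgw, ← sqrtPow C hC0, ← Real.sqrt_mul (pow_nonneg hC0 k)]
    exact Real.sqrt_le_sqrt hdet_upp
end

section
/- Suppose r : [0,∞) → ℝⁿ and v : [0,∞) → ℝⁿ are smooth curves with v(t) = P r(t) for an invertible real n×n matrix P with largest singular value δ₁ and smallest singular value δₙ, and the first m derivatives of r are linearly independent at each t. Then for each i ∈ {1,…,m−1}, the i-th curvatures satisfy (δₙ^{2i}/δ₁^{2i+1}) κ_{r,i}(t) ≤ κ_{v,i}(t) ≤ (δ₁^{2i}/δₙ^{2i+1}) κ_{r,i}(t). -/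
open Matrix Filter InnerProductSpace

section Aux

open Submodule Set

variable {E : Type*} [NormedAddCommGroup E] [InnerProductSpace ℝ E]

private lemma gs_min (f : ℕ → E) (k : ℕ) (s : E) (hs : s ∈ span ℝ (f '' Set.Iio k)) :
    ‖gramSchmidt ℝ f k‖ ≤ ‖f k - s‖ := by
  set K := span ℝ (f '' Set.Iio k) with hK
  have horth : ∀ w ∈ K, inner ℝ (gramSchmidt ℝ f k) w = (0 : ℝ) := by
    intro w hw
    rw [hK, ← span_gramSchmidt_Iio ℝ f k] at hw
    induction hw using Submodule.span_induction with
    | mem x hx =>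
      obtain ⟨j, hj, rfl⟩ := hx
      exact gramSchmidt_orthogonal ℝ f (ne_of_gt hj)
    | zero => simp
    | add x y _ _ hx hy => rw [inner_add_right, hx, hy, add_zero]
    | smul c x _ hx => rw [inner_smul_right, hx, mul_zero]
  have hmem : f k - gramSchmidt ℝ f k ∈ K := by
    rw [hK, ← span_gramSchmidt_Iio ℝ f k, gramSchmidt_def ℝ f k, sub_sub_cancel]
    refine Submodule.sum_mem _ fun j hj => ?_
    rw [starProjection_singleton]
    exact Submodule.smul_mem _ _ (subset_span ⟨j, Finset.mem_Iio.mp hj, rfl⟩)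
  have key : f k - s = gramSchmidt ℝ f k + ((f k - gramSchmidt ℝ f k) - s) := by abel
  have hz : inner ℝ (gramSchmidt ℝ f k) ((f k - gramSchmidt ℝ f k) - s) = (0 : ℝ) :=
    horth _ (Submodule.sub_mem _ hmem hs)
  rw [key]
  have hsq := norm_add_sq_real (gramSchmidt ℝ f k) (f k - gramSchmidt ℝ f k - s)
  rw [hz] at hsq
  nlinarith [norm_nonneg (f k - gramSchmidt ℝ f k - s),
    norm_nonneg (gramSchmidt ℝ f k),
    norm_nonneg (gramSchmidt ℝ f k + (f k - gramSchmidt ℝ f k - s))]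

private lemma gs_map_le (T : E →ₗ[ℝ] E) (C : ℝ) (hC : ∀ x, ‖T x‖ ≤ C * ‖x‖)
    (f : ℕ → E) (k : ℕ) :
    ‖gramSchmidt ℝ (⇑T ∘ f) k‖ ≤ C * ‖gramSchmidt ℝ f k‖ := by
  have hmem : f k - gramSchmidt ℝ f k ∈ span ℝ (f '' Set.Iio k) := by
    rw [← span_gramSchmidt_Iio ℝ f k, gramSchmidt_def ℝ f k, sub_sub_cancel]
    refine Submodule.sum_mem _ fun j hj => ?_
    rw [starProjection_singleton]
    exact Submodule.smul_mem _ _ (subset_span ⟨j, Finset.mem_Iio.mp hj, rfl⟩)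
  have hs : T (f k - gramSchmidt ℝ f k) ∈ span ℝ ((⇑T ∘ f) '' Set.Iio k) := by
    rw [Set.image_comp, ← Submodule.map_span]
    exact Submodule.mem_map_of_mem hmem
  calc ‖gramSchmidt ℝ (⇑T ∘ f) k‖ ≤ ‖(⇑T ∘ f) k - T (f k - gramSchmidt ℝ f k)‖ :=
        gs_min _ _ _ hs
    _ = ‖T (gramSchmidt ℝ f k)‖ := by simp [map_sub]
    _ ≤ C * ‖gramSchmidt ℝ f k‖ := hC _

private lemma toEuclideanLin_eigen {n : ℕ} (A : Matrix (Fin n) (Fin n) ℝ)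
    (hA : A.IsHermitian) (i : Fin n) :
    Matrix.toEuclideanLin A (hA.eigenvectorBasis i) = hA.eigenvalues i • hA.eigenvectorBasis i := by
  have h := hA.mulVec_eigenvectorBasis i
  ext j
  have := congrFun h j
  simpa [Matrix.toEuclideanLin_apply] using this

private lemma rayleigh {n : ℕ} (A : Matrix (Fin n) (Fin n) ℝ) (hA : A.IsHermitian)
    (x : EuclideanSpace ℝ (Fin n)) :
    (⨅ i, hA.eigenvalues i) * ‖x‖ ^ 2 ≤ inner ℝ x (Matrix.toEuclideanLin A x) ∧
      (inner ℝ x (Matrix.toEuclideanLin A x) : ℝ) ≤ (⨆ i, hA.eigenvalues i) * ‖x‖ ^ 2 := by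
  set b := hA.eigenvectorBasis
  have hsym : (Matrix.toEuclideanLin A).IsSymmetric := (Matrix.isHermitian_iff_isSymmetric.mp hA)
  have hx : (inner ℝ x (Matrix.toEuclideanLin A x) : ℝ)
      = ∑ i, hA.eigenvalues i * (inner ℝ (b i) x : ℝ) ^ 2 := by
    rw [← b.sum_inner_mul_inner x (Matrix.toEuclideanLin A x)]
    refine Finset.sum_congr rfl fun i _ => ?_
    have : (inner ℝ (b i) (Matrix.toEuclideanLin A x) : ℝ) = hA.eigenvalues i * inner ℝ (b i) x := by
      rw [← hsym (b i) x, toEuclideanLin_eigen A hA i, inner_smul_left]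
      simp [RCLike.conj_to_real, b]
    rw [this, real_inner_comm x (b i)]; ring
  have hnorm : ‖x‖ ^ 2 = ∑ i, (inner ℝ (b i) x : ℝ) ^ 2 := by
    have := b.sum_inner_mul_inner x x
    rw [real_inner_self_eq_norm_sq] at this
    rw [← this]
    refine Finset.sum_congr rfl fun i _ => ?_
    rw [real_inner_comm x (b i)]; ring
  constructor
  · rw [hx, hnorm, Finset.mul_sum]
    refine Finset.sum_le_sum fun i _ => ?_
    exact mul_le_mul_of_nonneg_right (ciInf_le (Finite.bddBelow_range _) i) (sq_nonneg _)
  · rw [hx, hnorm, Finset.mul_sum]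
    refine Finset.sum_le_sum fun i _ => ?_
    exact mul_le_mul_of_nonneg_right (le_ciSup (Finite.bddAbove_range _) i) (sq_nonneg _)

private lemma inner_toEuclideanLin_mul {n : ℕ} (P : Matrix (Fin n) (Fin n) ℝ)
    (y : EuclideanSpace ℝ (Fin n)) :
    (inner ℝ y (Matrix.toEuclideanLin (P * Pᵀ) y) : ℝ) = ‖Matrix.toEuclideanLin Pᵀ y‖ ^ 2 := by
  rw [← real_inner_self_eq_norm_sq]
  simp only [Matrix.toEuclideanLin_apply, PiLp.inner_apply, RCLike.inner_apply, conj_trivial]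
  rw [← Matrix.mulVec_mulVec]
  have h2 := Matrix.dotProduct_mulVec ((WithLp.equiv 2 (Fin n → ℝ)) y) P
    (Pᵀ *ᵥ (WithLp.equiv 2 (Fin n → ℝ)) y)
  rw [← Matrix.mulVec_transpose] at h2
  simpa only [dotProduct, WithLp.equiv_apply, mul_comm] using h2

private lemma adj_toEuclideanLin {n : ℕ} (M : Matrix (Fin n) (Fin n) ℝ)
    (x w : EuclideanSpace ℝ (Fin n)) :
    (inner ℝ (Matrix.toEuclideanLin M x) w : ℝ) = inner ℝ x (Matrix.toEuclideanLin Mᵀ w) := by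
  simp only [Matrix.toEuclideanLin_apply, PiLp.inner_apply, RCLike.inner_apply, conj_trivial]
  have h2 := Matrix.dotProduct_mulVec ((WithLp.equiv 2 (Fin n → ℝ)) w) M
    ((WithLp.equiv 2 (Fin n → ℝ)) x)
  rw [← Matrix.mulVec_transpose] at h2
  have h3 : ((M *ᵥ (WithLp.equiv 2 (Fin n → ℝ)) x) ⬝ᵥ (WithLp.equiv 2 (Fin n → ℝ)) w)
      = ((WithLp.equiv 2 (Fin n → ℝ)) x) ⬝ᵥ (Mᵀ *ᵥ (WithLp.equiv 2 (Fin n → ℝ)) w) := by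
    rw [dotProduct_comm, h2, dotProduct_comm]
  simpa only [dotProduct, WithLp.equiv_apply, mul_comm] using h3

private lemma toEuclideanLin_comp {n : ℕ} (M N : Matrix (Fin n) (Fin n) ℝ)
    (x : EuclideanSpace ℝ (Fin n)) :
    Matrix.toEuclideanLin M (Matrix.toEuclideanLin N x) = Matrix.toEuclideanLin (M * N) x := by
  ext j
  simp [Matrix.toEuclideanLin_apply, Matrix.mulVec_mulVec]


private lemma sv_facts {n : ℕ} (hn : 0 < n) (P : Matrix (Fin n) (Fin n) ℝ) (hP : IsUnit P.det)
    (hherm : (P * Pᵀ).IsHermitian) :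
    0 < Real.sqrt (⨅ i, hherm.eigenvalues i) ∧
    Real.sqrt (⨅ i, hherm.eigenvalues i) ≤ Real.sqrt (⨆ i, hherm.eigenvalues i) ∧
    ∀ x : EuclideanSpace ℝ (Fin n),
      Real.sqrt (⨅ i, hherm.eigenvalues i) * ‖x‖ ≤ ‖Matrix.toEuclideanLin P x‖ ∧
      ‖Matrix.toEuclideanLin P x‖ ≤ Real.sqrt (⨆ i, hherm.eigenvalues i) * ‖x‖ := by
  haveI : Nonempty (Fin n) := Fin.pos_iff_nonempty.mp hn
  have hpsd : (P * Pᵀ).PosSemidef := by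
    have := Matrix.posSemidef_self_mul_conjTranspose P
    simpa using this
  have heig_nonneg : ∀ i, 0 ≤ hherm.eigenvalues i := fun i => hpsd.eigenvalues_nonneg i
  have hdet : (P * Pᵀ).det ≠ 0 := by
    rw [Matrix.det_mul, Matrix.det_transpose]
    exact mul_ne_zero (IsUnit.ne_zero hP) (IsUnit.ne_zero hP)
  have heig_pos : ∀ i, 0 < hherm.eigenvalues i := by
    intro i
    rcases lt_or_eq_of_le (heig_nonneg i) with h | h
    · exact h
    · exfalso
      apply hdet
      have := hherm.det_eq_prod_eigenvalues
      rw [this]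
      refine Finset.prod_eq_zero (Finset.mem_univ i) ?_
      simp [← h]
  obtain ⟨jmin, hjmin⟩ := exists_eq_ciInf_of_finite (f := hherm.eigenvalues)
  obtain ⟨jmax, hjmax⟩ := exists_eq_ciSup_of_finite (f := hherm.eigenvalues)
  have hinf_pos : 0 < ⨅ i, hherm.eigenvalues i := hjmin ▸ heig_pos jmin
  have hinf_nonneg : (0:ℝ) ≤ ⨅ i, hherm.eigenvalues i := le_of_lt hinf_pos
  have hsup_nonneg : (0:ℝ) ≤ ⨆ i, hherm.eigenvalues i := le_trans hinf_nonneg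
    (le_trans (ciInf_le (Finite.bddBelow_range _) jmax) (le_ciSup (Finite.bddAbove_range _) jmax))
  set s := Real.sqrt (⨅ i, hherm.eigenvalues i) with hs
  set S := Real.sqrt (⨆ i, hherm.eigenvalues i) with hS
  have hs_pos : 0 < s := Real.sqrt_pos.mpr hinf_pos
  have hS_le : s ≤ S := Real.sqrt_le_sqrt
    (le_trans (ciInf_le (Finite.bddBelow_range _) jmax) (le_ciSup (Finite.bddAbove_range _) jmax))
  -- bounds for Pᵀ
  have hPt : ∀ y : EuclideanSpace ℝ (Fin n),
      s * ‖y‖ ≤ ‖Matrix.toEuclideanLin Pᵀ y‖ ∧ ‖Matrix.toEuclideanLin Pᵀ y‖ ≤ S * ‖y‖ := by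
    intro y
    obtain ⟨hlo, hhi⟩ := rayleigh (P * Pᵀ) hherm y
    rw [inner_toEuclideanLin_mul] at hlo hhi
    constructor
    · have h := Real.sqrt_le_sqrt hlo
      rwa [Real.sqrt_mul hinf_nonneg, Real.sqrt_sq (norm_nonneg _),
        Real.sqrt_sq (norm_nonneg _)] at h
    · have h := Real.sqrt_le_sqrt hhi
      rwa [Real.sqrt_mul hsup_nonneg, Real.sqrt_sq (norm_nonneg _),
        Real.sqrt_sq (norm_nonneg _)] at h
  refine ⟨hs_pos, hS_le, fun x => ?_⟩
  constructor
  · -- lower bound for P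
    have hPtdet : IsUnit Pᵀ.det := by rwa [Matrix.det_transpose]
    set z := Matrix.toEuclideanLin Pᵀ⁻¹ x with hz
    have hzx : Matrix.toEuclideanLin Pᵀ z = x := by
      rw [hz, toEuclideanLin_comp, Matrix.mul_nonsing_inv _ hPtdet]
      simp [Matrix.toEuclideanLin_apply]
    have hxx : ‖x‖ ^ 2 ≤ ‖z‖ * ‖Matrix.toEuclideanLin P x‖ := by
      have h1 : (inner ℝ x x : ℝ) = inner ℝ z (Matrix.toEuclideanLin P x) := by
        conv_lhs => rw [← hzx]
        rw [adj_toEuclideanLin, Matrix.transpose_transpose, hzx]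
      calc ‖x‖ ^ 2 = (inner ℝ x x : ℝ) := (real_inner_self_eq_norm_sq x).symm
        _ = inner ℝ z (Matrix.toEuclideanLin P x) := h1
        _ ≤ ‖z‖ * ‖Matrix.toEuclideanLin P x‖ := real_inner_le_norm _ _
    have hzb : s * ‖z‖ ≤ ‖x‖ := by rw [← hzx]; exact (hPt z).1
    rcases eq_or_lt_of_le (norm_nonneg x) with h0 | h0
    · rw [← h0]
      simp [← h0]
    · nlinarith [norm_nonneg (Matrix.toEuclideanLin P x), norm_nonneg z]
  · -- upper bound for P
    have hxx : ‖Matrix.toEuclideanLin P x‖ ^ 2 ≤ ‖x‖ * (S * ‖Matrix.toEuclideanLin P x‖) := by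
      calc ‖Matrix.toEuclideanLin P x‖ ^ 2
          = (inner ℝ (Matrix.toEuclideanLin P x) (Matrix.toEuclideanLin P x) : ℝ) :=
            (real_inner_self_eq_norm_sq _).symm
        _ = inner ℝ x (Matrix.toEuclideanLin Pᵀ (Matrix.toEuclideanLin P x)) :=
            adj_toEuclideanLin P x _
        _ ≤ ‖x‖ * ‖Matrix.toEuclideanLin Pᵀ (Matrix.toEuclideanLin P x)‖ := real_inner_le_norm _ _
        _ ≤ ‖x‖ * (S * ‖Matrix.toEuclideanLin P x‖) := by
            exact mul_le_mul_of_nonneg_left (hPt _).2 (norm_nonneg _)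
    rcases eq_or_lt_of_le (norm_nonneg (Matrix.toEuclideanLin P x)) with h0 | h0
    · rw [← h0]
      exact mul_nonneg (le_trans (le_of_lt hs_pos) hS_le) (norm_nonneg _)
    · nlinarith [norm_nonneg x]

private lemma iteratedDeriv_clm_comp {F G : Type*} [NormedAddCommGroup F] [NormedSpace ℝ F]
    [NormedAddCommGroup G] [NormedSpace ℝ G]
    (g : F →L[ℝ] G) (f : ℝ → F) (hf : ContDiff ℝ (⊤ : ℕ∞) f) (k : ℕ) (t : ℝ) :
    iteratedDeriv k (fun s => g (f s)) t = g (iteratedDeriv k f t) := by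
  have h := g.iteratedFDeriv_comp_left (hf.contDiffAt (x := t)) (i := k) (by exact_mod_cast le_top)
  rw [iteratedDeriv_eq_iteratedFDeriv, iteratedDeriv_eq_iteratedFDeriv]
  show iteratedFDeriv ℝ k (g ∘ f) t (fun _ => 1) = _
  rw [h]
  simp

private lemma curv_arith (i : ℕ) (hi : 1 ≤ i) (δ1 δn a b c a' b' c' : ℝ)
    (hδn : 0 < δn) (hδ : δn ≤ δ1)
    (ha : 0 < a) (hb : 0 < b) (hc : 0 < c)
    (ha1 : δn * a ≤ a') (ha2 : a' ≤ δ1 * a)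
    (hb1 : δn * b ≤ b') (hb2 : b' ≤ δ1 * b)
    (hc1 : δn * c ≤ c') (hc2 : c' ≤ δ1 * c) :
    δn ^ (2*i) / δ1 ^ (2*i+1) * (a/(b*c)) ≤ a'/(b'*c') ∧
      a'/(b'*c') ≤ δ1 ^ (2*i) / δn ^ (2*i+1) * (a/(b*c)) := by
  have hδ1 : 0 < δ1 := lt_of_lt_of_le hδn hδ
  have hb' : 0 < b' := lt_of_lt_of_le (by positivity) hb1
  have hc' : 0 < c' := lt_of_lt_of_le (by positivity) hc1
  have ha' : 0 ≤ a' := le_trans (by positivity) ha1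
  have hj : 2*i = (2*i-1)+1 := by omega
  have hpow : δn^(2*i-1) ≤ δ1^(2*i-1) := pow_le_pow_left₀ hδn.le hδ _
  have hpj : 0 < δn^(2*i-1) := pow_pos hδn _
  have habc : (0:ℝ) ≤ a/(b*c) := by positivity
  constructor
  · have step1 : (δn*a)/((δ1*b)*(δ1*c)) ≤ a'/(b'*c') :=
      div_le_div₀ ha' ha1 (by positivity)
        (mul_le_mul hb2 hc2 hc'.le (by positivity))
    have heq : (δn*a)/((δ1*b)*(δ1*c)) = δn/δ1^2 * (a/(b*c)) := by
      field_simp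
    have hconst : δn^(2*i)/δ1^(2*i+1) ≤ δn/δ1^2 := by
      rw [div_le_div_iff₀ (by positivity) (by positivity)]
      have h1 : δn^(2*i) = δn * δn^(2*i-1) := by nth_rewrite 1 [hj]; rw [pow_succ']
      have h2 : δ1^(2*i+1) = δ1^(2*i-1) * δ1^2 := by
        rw [← pow_add]; congr 1; omega
      rw [h1, h2]
      nlinarith [mul_le_mul_of_nonneg_left hpow (show (0:ℝ) ≤ δn * δ1^2 by positivity)]
    calc δn^(2*i)/δ1^(2*i+1) * (a/(b*c)) ≤ δn/δ1^2 * (a/(b*c)) :=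
          mul_le_mul_of_nonneg_right hconst habc
      _ = (δn*a)/((δ1*b)*(δ1*c)) := heq.symm
      _ ≤ a'/(b'*c') := step1
  · have step1 : a'/(b'*c') ≤ (δ1*a)/((δn*b)*(δn*c)) :=
      div_le_div₀ (by positivity) ha2 (by positivity)
        (mul_le_mul hb1 hc1 (by positivity) hb'.le)
    have heq : (δ1*a)/((δn*b)*(δn*c)) = δ1/δn^2 * (a/(b*c)) := by
      field_simp
    have hconst : δ1/δn^2 ≤ δ1^(2*i)/δn^(2*i+1) := by
      rw [div_le_div_iff₀ (by positivity) (by positivity)]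
      have h1 : δ1^(2*i) = δ1 * δ1^(2*i-1) := by nth_rewrite 1 [hj]; rw [pow_succ']
      have h2 : δn^(2*i+1) = δn^(2*i-1) * δn^2 := by
        rw [← pow_add]; congr 1; omega
      rw [h1, h2]
      nlinarith [mul_le_mul_of_nonneg_left hpow (show (0:ℝ) ≤ δ1 * δn^2 by positivity)]
    calc a'/(b'*c') ≤ (δ1*a)/((δn*b)*(δn*c)) := step1
      _ = δ1/δn^2 * (a/(b*c)) := heq
      _ ≤ δ1^(2*i)/δn^(2*i+1) * (a/(b*c)) := mul_le_mul_of_nonneg_right hconst habc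


end Aux

/-- Gram–Schmidt vectors of the derivatives of a curve. -/
noncomputable def curvGS {n : ℕ} (r : ℝ → EuclideanSpace ℝ (Fin n)) (t : ℝ) :
    ℕ → EuclideanSpace ℝ (Fin n) :=
  InnerProductSpace.gramSchmidt ℝ (fun k => iteratedDeriv (k + 1) r t)

/-- The `i`-th curvature `κ_i(t) = ‖E_{i+1}(t)‖ / (‖E₁(t)‖ · ‖E_i(t)‖)` (for `i ≥ 1`). -/
noncomputable def curv {n : ℕ} (r : ℝ → EuclideanSpace ℝ (Fin n)) (i : ℕ) (t : ℝ) : ℝ :=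
  ‖curvGS r t i‖ / (‖curvGS r t 0‖ * ‖curvGS r t (i - 1)‖)

/-- If `v(t) = P r(t)` for an invertible matrix `P` with largest singular value `δ₁` and smallest
singular value `δₙ`, then the `i`-th curvatures satisfy
`(δₙ^{2i}/δ₁^{2i+1}) κ_{r,i}(t) ≤ κ_{v,i}(t) ≤ (δ₁^{2i}/δₙ^{2i+1}) κ_{r,i}(t)`. -/
theorem curvature_bounds_under_equivalence (n m : ℕ) (P : Matrix (Fin n) (Fin n) ℝ)
    (hP : IsUnit P.det) (hherm : (P * Pᵀ).IsHermitian) (δ1 δn : ℝ)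
    (hδ1 : δ1 = Real.sqrt (⨆ i, hherm.eigenvalues i))
    (hδn : δn = Real.sqrt (⨅ i, hherm.eigenvalues i))
    (r v : ℝ → EuclideanSpace ℝ (Fin n)) (hr : ContDiff ℝ (⊤ : ℕ∞) r)
    (hind : ∀ t : ℝ, 0 ≤ t →
      LinearIndependent ℝ (fun k : Fin m => iteratedDeriv ((k : ℕ) + 1) r t))
    (hv : ∀ t, v t = Matrix.toEuclideanLin P (r t)) :
    ∀ i : ℕ, 1 ≤ i → i ≤ m - 1 → ∀ t : ℝ, 0 ≤ t →
      δn ^ (2 * i) / δ1 ^ (2 * i + 1) * curv r i t ≤ curv v i t ∧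
        curv v i t ≤ δ1 ^ (2 * i) / δn ^ (2 * i + 1) * curv r i t := by
  intro i hi1 him t ht
  have hm2 : 2 ≤ m := by omega
  have hind' := hind t ht
  have hn : 0 < n := by
    by_contra h
    push_neg at h
    have hn0 : n = 0 := by omega
    subst hn0
    haveI : Subsingleton (EuclideanSpace ℝ (Fin 0)) :=
      ⟨fun a b => PiLp.ext fun j => j.elim0⟩
    exact hind'.ne_zero ⟨0, by omega⟩ (Subsingleton.elim _ _)
  obtain ⟨hsn_pos, hsle, hbnd⟩ := sv_facts hn P hP hherm
  rw [← hδn] at hsn_pos hsle hbnd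
  rw [← hδ1] at hsle hbnd
  set T := Matrix.toEuclideanLin P with hT
  set f : ℕ → EuclideanSpace ℝ (Fin n) := fun k => iteratedDeriv (k + 1) r t with hf
  have hfam : (fun k : ℕ => iteratedDeriv (k + 1) v t) = ⇑T ∘ f := by
    funext k
    have hvr : v = fun s => (LinearMap.toContinuousLinearMap T) (r s) := by
      funext s; rw [hv s]; simp [hT]
    rw [hvr, iteratedDeriv_clm_comp _ r hr (k + 1) t]
    simp [hf]
  have hup : ∀ k, ‖gramSchmidt ℝ (⇑T ∘ f) k‖ ≤ δ1 * ‖gramSchmidt ℝ f k‖ :=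
    gs_map_le T δ1 (fun x => (hbnd x).2) f
  have hTinv : ∀ x, Matrix.toEuclideanLin P⁻¹ (T x) = x := by
    intro x
    rw [hT, toEuclideanLin_comp, Matrix.nonsing_inv_mul _ hP]
    simp [Matrix.toEuclideanLin_apply]
  have hTinv' : ∀ x, T (Matrix.toEuclideanLin P⁻¹ x) = x := by
    intro x
    rw [hT, toEuclideanLin_comp, Matrix.mul_nonsing_inv _ hP]
    simp [Matrix.toEuclideanLin_apply]
  have hT'bnd : ∀ x, ‖Matrix.toEuclideanLin P⁻¹ x‖ ≤ (1 / δn) * ‖x‖ := by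
    intro x
    have h1 := (hbnd (Matrix.toEuclideanLin P⁻¹ x)).1
    rw [hTinv' x] at h1
    rw [one_div, inv_mul_eq_div, le_div_iff₀ hsn_pos, mul_comm]
    exact h1
  have hlo : ∀ k, δn * ‖gramSchmidt ℝ f k‖ ≤ ‖gramSchmidt ℝ (⇑T ∘ f) k‖ := by
    intro k
    have h := gs_map_le (Matrix.toEuclideanLin P⁻¹) (1 / δn) hT'bnd (⇑T ∘ f) k
    have hcomp : ⇑(Matrix.toEuclideanLin P⁻¹) ∘ (⇑T ∘ f) = f := by
      funext j
      exact hTinv (f j)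
    rw [hcomp] at h
    calc δn * ‖gramSchmidt ℝ f k‖
        ≤ δn * ((1 / δn) * ‖gramSchmidt ℝ (⇑T ∘ f) k‖) :=
          mul_le_mul_of_nonneg_left h hsn_pos.le
      _ = ‖gramSchmidt ℝ (⇑T ∘ f) k‖ := by field_simp
  have hne : ∀ k, k < m → gramSchmidt ℝ f k ≠ 0 := by
    intro k hk
    apply gramSchmidt_ne_zero_coe (𝕜 := ℝ) k
    exact hind'.comp (fun j : Set.Iic k => (⟨j.1, lt_of_le_of_lt j.2 hk⟩ : Fin m))
      (fun a b hab => Subtype.ext (congrArg Fin.val hab))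
  have hpos : ∀ k, k < m → 0 < ‖gramSchmidt ℝ f k‖ := fun k hk =>
    norm_pos_iff.mpr (hne k hk)
  have hgoal := curv_arith i hi1 δ1 δn
    ‖gramSchmidt ℝ f i‖ ‖gramSchmidt ℝ f 0‖ ‖gramSchmidt ℝ f (i - 1)‖
    ‖gramSchmidt ℝ (⇑T ∘ f) i‖ ‖gramSchmidt ℝ (⇑T ∘ f) 0‖ ‖gramSchmidt ℝ (⇑T ∘ f) (i - 1)‖
    hsn_pos hsle (hpos i (by omega)) (hpos 0 (by omega)) (hpos (i - 1) (by omega))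
    (hlo i) (hup i) (hlo 0) (hup 0) (hlo (i - 1)) (hup (i - 1))
  simp only [curv, curvGS]
  rw [hfam, ← hf]
  exact hgoal
end

section
/- Suppose r and v are smooth curves in ℝⁿ with v(t) = P r(t) for an invertible real matrix P, and κ_{r,i}, κ_{v,i} denote their i-th curvatures (assumed defined for all t ≥ 0). Then lim_{t→∞} κ_{v,i}(t) = 0 if and only if lim_{t→∞} κ_{r,i}(t) = 0; lim_{t→∞} κ_{v,i}(t) = +∞ if and only if lim_{t→∞} κ_{r,i}(t) = +∞; and κ_{v,i} is bounded if and only if κ_{r,i} is bounded. -/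
open Matrix Filter

open InnerProductSpace

section Aux

variable {E : Type*} [NormedAddCommGroup E] [InnerProductSpace ℝ E]

lemma gs_sub_mem (f : ℕ → E) (n : ℕ) :
    f n - gramSchmidt ℝ f n ∈ Submodule.span ℝ (f '' Set.Iio n) := by
  rw [← span_gramSchmidt_Iio ℝ f n, gramSchmidt_def ℝ f n, sub_sub_cancel]
  refine Submodule.sum_mem _ fun k hk => ?_
  rw [Submodule.starProjection_singleton]
  exact Submodule.smul_mem _ _
    (Submodule.subset_span ⟨k, Finset.mem_Iio.mp hk, rfl⟩)

lemma gs_min_s3 (f : ℕ → E) (n : ℕ) (y : E) (hy : y ∈ Submodule.span ℝ (f '' Set.Iio n)) :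
    ‖gramSchmidt ℝ f n‖ ≤ ‖f n - y‖ := by
  set G := gramSchmidt ℝ f n with hG
  have horth : ∀ z ∈ Submodule.span ℝ (f '' Set.Iio n), inner ℝ G z = (0 : ℝ) := by
    intro z hz
    rw [← span_gramSchmidt_Iio ℝ f n] at hz
    induction hz using Submodule.span_induction with
    | mem x hx =>
      obtain ⟨k, hk, rfl⟩ := hx
      exact gramSchmidt_orthogonal ℝ f (Set.mem_Iio.mp hk).ne'
    | zero => simp
    | add x y hx hy ihx ihy => simp [inner_add_right, ihx, ihy]
    | smul a x hx ih => simp [inner_smul_right, ih]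
  have hmem := gs_sub_mem f n
  have h0 : inner ℝ G ((f n - G) - y) = (0 : ℝ) :=
    horth _ (Submodule.sub_mem _ hmem hy)
  have hdecomp : f n - y = G + ((f n - G) - y) := by abel
  have key : ‖f n - y‖ ^ 2 = ‖G‖ ^ 2 + ‖(f n - G) - y‖ ^ 2 := by
    rw [hdecomp, norm_add_sq_real, h0]; ring
  nlinarith [norm_nonneg (f n - y), norm_nonneg G, sq_nonneg ‖(f n - G) - y‖]

lemma gs_comp_le (T : E →L[ℝ] E) (f : ℕ → E) (n : ℕ) :
    ‖gramSchmidt ℝ (fun k => T (f k)) n‖ ≤ ‖T‖ * ‖gramSchmidt ℝ f n‖ := by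
  have hmem := gs_sub_mem f n
  have hy : T (f n - gramSchmidt ℝ f n) ∈
      Submodule.span ℝ ((fun k => T (f k)) '' Set.Iio n) := by
    have h1 : T (f n - gramSchmidt ℝ f n) ∈
        Submodule.map (T : E →ₗ[ℝ] E) (Submodule.span ℝ (f '' Set.Iio n)) :=
      Submodule.mem_map_of_mem hmem
    rw [Submodule.map_span, Set.image_image] at h1
    exact h1
  calc ‖gramSchmidt ℝ (fun k => T (f k)) n‖
      ≤ ‖T (f n) - T (f n - gramSchmidt ℝ f n)‖ := gs_min_s3 _ n _ hy
    _ = ‖T (gramSchmidt ℝ f n)‖ := by rw [← map_sub, sub_sub_cancel]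
    _ ≤ ‖T‖ * ‖gramSchmidt ℝ f n‖ := T.le_opNorm _

lemma div_bound {X Y Z X' Y' Z' b1 b2 : ℝ} (hX : 0 ≤ X) (hX' : 0 ≤ X')
    (hY' : 0 < Y') (hZ' : 0 < Z') (hb1 : 0 < b1) (hb2 : 0 < b2)
    (hXb : X ≤ b1 * X') (hYb : Y' ≤ b2 * Y) (hZb : Z' ≤ b2 * Z) :
    X / (Y * Z) ≤ b1 * b2 * b2 * (X' / (Y' * Z')) := by
  have hY : 0 < Y := by nlinarith
  have hZ : 0 < Z := by nlinarith
  rw [← mul_div_assoc, div_le_div_iff₀ (by positivity) (by positivity)]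
  have h1 : X * Y' ≤ (b1 * X') * (b2 * Y) :=
    mul_le_mul hXb hYb hY'.le (by positivity)
  have h2 : X * Y' * Z' ≤ (b1 * X') * (b2 * Y) * (b2 * Z) :=
    mul_le_mul h1 hZb hZ'.le (by positivity)
  nlinarith [h2]

lemma tendsto_zero_trans {f g : ℝ → ℝ} {C : ℝ} (hf : ∀ t, 0 ≤ f t)
    (h : ∀ t, 0 ≤ t → f t ≤ C * g t) (hg : Tendsto g atTop (nhds 0)) :
    Tendsto f atTop (nhds 0) :=
  squeeze_zero' (Eventually.of_forall hf) ((eventually_ge_atTop 0).mono h)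
    (by simpa using hg.const_mul C)

lemma tendsto_atTop_trans {f g : ℝ → ℝ} {C : ℝ} (hC : 0 < C)
    (h : ∀ t, 0 ≤ t → f t ≤ C * g t) (hf : Tendsto f atTop atTop) :
    Tendsto g atTop atTop := by
  refine tendsto_atTop_mono' atTop ?_ (hf.atTop_div_const hC)
  filter_upwards [eventually_ge_atTop (0 : ℝ)] with t ht
  rw [div_le_iff₀ hC]
  nlinarith [h t ht]

end Aux

/-- If `v(t) = P r(t)` for an invertible matrix `P`, then for each `i` the `i`-th curvatures of
`v` and `r` simultaneously tend to `0`, simultaneously tend to `+∞`, and are simultaneously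
bounded, as `t → ∞`. -/
theorem curvature_limits_under_equivalence (n : ℕ) (P : Matrix (Fin n) (Fin n) ℝ)
    (hP : IsUnit P.det) (r v : ℝ → EuclideanSpace ℝ (Fin n)) (hr : ContDiff ℝ (⊤ : ℕ∞) r)
    (hv : ∀ t, v t = Matrix.toEuclideanLin P (r t)) (i : ℕ) (hi : 1 ≤ i)
    (hind : ∀ t : ℝ, 0 ≤ t →
      LinearIndependent ℝ (fun k : Fin (i + 1) => iteratedDeriv ((k : ℕ) + 1) r t)) :
    (Tendsto (curv v i) atTop (nhds 0) ↔ Tendsto (curv r i) atTop (nhds 0)) ∧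
    (Tendsto (curv v i) atTop atTop ↔ Tendsto (curv r i) atTop atTop) ∧
    ((∃ C : ℝ, ∀ t : ℝ, 0 ≤ t → curv v i t ≤ C) ↔
      (∃ C : ℝ, ∀ t : ℝ, 0 ≤ t → curv r i t ≤ C)) := by
  classical
  set T : EuclideanSpace ℝ (Fin n) →L[ℝ] EuclideanSpace ℝ (Fin n) :=
    LinearMap.toContinuousLinearMap (Matrix.toEuclideanLin P) with hTdef
  set S : EuclideanSpace ℝ (Fin n) →L[ℝ] EuclideanSpace ℝ (Fin n) :=
    LinearMap.toContinuousLinearMap (Matrix.toEuclideanLin P⁻¹) with hSdef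
  have hST : ∀ x : EuclideanSpace ℝ (Fin n), S (T x) = x := by
    intro x
    simp [hTdef, hSdef, Matrix.toEuclideanLin_apply, Matrix.mulVec_mulVec,
      Matrix.nonsing_inv_mul P hP]
  have hdv : ∀ (k : ℕ) (t : ℝ), iteratedDeriv (k + 1) v t = T (iteratedDeriv (k + 1) r t) := by
    intro k t
    have hveq : v = T ∘ r := by
      funext s
      rw [Function.comp_apply, hv s]
      simp [hTdef]
    rw [hveq, iteratedDeriv_eq_iteratedFDeriv, iteratedDeriv_eq_iteratedFDeriv,
      T.iteratedFDeriv_comp_left hr.contDiffAt (by exact_mod_cast le_top)]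
    rfl
  have hGSv : ∀ t : ℝ, curvGS v t = gramSchmidt ℝ (fun k => T (iteratedDeriv (k + 1) r t)) := by
    intro t
    have hfe : (fun k : ℕ => iteratedDeriv (k + 1) v t) =
        fun k => T (iteratedDeriv (k + 1) r t) := funext fun k => hdv k t
    unfold curvGS
    rw [hfe]
  have hGSr : ∀ t : ℝ, curvGS r t =
      gramSchmidt ℝ (fun k => S (iteratedDeriv (k + 1) v t)) := by
    intro t
    have hfe : (fun k : ℕ => iteratedDeriv (k + 1) r t) =
        fun k => S (iteratedDeriv (k + 1) v t) := funext fun k => by rw [hdv k t, hST]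
    unfold curvGS
    rw [hfe]
  have hVR : ∀ (t : ℝ) (k : ℕ), ‖curvGS v t k‖ ≤ ‖T‖ * ‖curvGS r t k‖ := by
    intro t k
    rw [hGSv t]
    exact gs_comp_le T _ k
  have hRV : ∀ (t : ℝ) (k : ℕ), ‖curvGS r t k‖ ≤ ‖S‖ * ‖curvGS v t k‖ := by
    intro t k
    rw [hGSr t]
    exact gs_comp_le S _ k
  have hr0 : ∀ t : ℝ, 0 ≤ t → ∀ k : ℕ, k ≤ i → curvGS r t k ≠ 0 := by
    intro t ht k hk
    apply gramSchmidt_ne_zero_coe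
    exact (hind t ht).comp
      (fun m : Set.Iic k => (⟨(m : ℕ), Nat.lt_succ_of_le (le_trans m.2 hk)⟩ : Fin (i + 1)))
      (fun a b hab => Subtype.ext (by simpa [Fin.ext_iff] using hab))
  set b1 : ℝ := ‖T‖ + 1 with hb1def
  set b2 : ℝ := ‖S‖ + 1 with hb2def
  have hb1 : 0 < b1 := by positivity
  have hb2 : 0 < b2 := by positivity
  set C : ℝ := max (b1 * b2 * b2) (b2 * b1 * b1) with hCdef
  have hC : 0 < C := lt_max_of_lt_left (by positivity)
  have hVle : ∀ (t : ℝ) (k : ℕ), ‖curvGS v t k‖ ≤ b1 * ‖curvGS r t k‖ := fun t k =>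
    (hVR t k).trans (by nlinarith [norm_nonneg (curvGS r t k)])
  have hRle : ∀ (t : ℝ) (k : ℕ), ‖curvGS r t k‖ ≤ b2 * ‖curvGS v t k‖ := fun t k =>
    (hRV t k).trans (by nlinarith [norm_nonneg (curvGS v t k)])
  have hkey : ∀ t : ℝ, 0 ≤ t → curv v i t ≤ C * curv r i t ∧ curv r i t ≤ C * curv v i t := by
    intro t ht
    have hR0 : 0 < ‖curvGS r t 0‖ := norm_pos_iff.mpr (hr0 t ht 0 (Nat.zero_le i))
    have hRi1 : 0 < ‖curvGS r t (i - 1)‖ :=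
      norm_pos_iff.mpr (hr0 t ht (i - 1) (Nat.sub_le i 1))
    have hV0 : 0 < ‖curvGS v t 0‖ := by nlinarith [hRle t 0]
    have hVi1 : 0 < ‖curvGS v t (i - 1)‖ := by nlinarith [hRle t (i - 1)]
    constructor
    · have h := div_bound (norm_nonneg (curvGS v t i)) (norm_nonneg (curvGS r t i))
        hR0 hRi1 hb1 hb2 (hVle t i) (hRle t 0) (hRle t (i - 1))
      refine h.trans ?_
      unfold curv
      apply mul_le_mul_of_nonneg_right (le_max_left _ _)
      positivity
    · have h := div_bound (norm_nonneg (curvGS r t i)) (norm_nonneg (curvGS v t i))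
        hV0 hVi1 hb2 hb1 (hRle t i) (hVle t 0) (hVle t (i - 1))
      refine h.trans ?_
      unfold curv
      apply mul_le_mul_of_nonneg_right (le_max_right _ _)
      positivity
  have hvnn : ∀ t, 0 ≤ curv v i t := fun t => by unfold curv; positivity
  have hrnn : ∀ t, 0 ≤ curv r i t := fun t => by unfold curv; positivity
  refine ⟨⟨fun h => ?_, fun h => ?_⟩, ⟨fun h => ?_, fun h => ?_⟩, ⟨fun ⟨D, hD⟩ => ?_, fun ⟨D, hD⟩ => ?_⟩⟩
  · exact tendsto_zero_trans hrnn (fun t ht => (hkey t ht).2) h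
  · exact tendsto_zero_trans hvnn (fun t ht => (hkey t ht).1) h
  · exact tendsto_atTop_trans hC (fun t ht => (hkey t ht).1) h
  · exact tendsto_atTop_trans hC (fun t ht => (hkey t ht).2) h
  · exact ⟨C * D, fun t ht => ((hkey t ht).2).trans
      (mul_le_mul_of_nonneg_left (hD t ht) hC.le)⟩
  · exact ⟨C * D, fun t ht => ((hkey t ht).1).trans
      (mul_le_mul_of_nonneg_left (hD t ht) hC.le)⟩
end

section
/- Let A = diag(λ₁,…,λₙ) be a real diagonal matrix and r(t) = e^{tA} r₀ with all coordinates r_{i0} of r₀ nonzero and with at least two distinct nonzero eigenvalues. Then the square of the first curvature of the trajectory satisfies κ(t)² = [Σ_{i<j} (λᵢλⱼ(λⱼ−λᵢ) r_{i0} r_{j0})² e^{2(λᵢ+λⱼ)t}] / [Σₖ (λₖ r_{k0})² e^{2λₖ t}]³. -/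
open Matrix Filter RealInnerProductSpace

/-- The trajectory `t ↦ e^{tA} r₀` of the linear system `ṙ = A r`. -/
noncomputable def traj {n : ℕ} (A : Matrix (Fin n) (Fin n) ℝ)
    (r₀ : EuclideanSpace ℝ (Fin n)) (t : ℝ) : EuclideanSpace ℝ (Fin n) :=
  Matrix.toEuclideanLin (NormedSpace.exp (t • A)) r₀

section aux
variable {n : ℕ}

noncomputable def Fk (l : Fin n → ℝ) (r₀ : EuclideanSpace ℝ (Fin n)) (k : ℕ) (t : ℝ) :
    EuclideanSpace ℝ (Fin n) :=
  (WithLp.equiv 2 (Fin n → ℝ)).symm (fun i => l i ^ k * Real.exp (l i * t) * r₀ i)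

lemma Fk_apply (l : Fin n → ℝ) (r₀ : EuclideanSpace ℝ (Fin n)) (k : ℕ) (t : ℝ) (i : Fin n) :
    Fk l r₀ k t i = l i ^ k * Real.exp (l i * t) * r₀ i := rfl

lemma hasDerivAt_Fk (l : Fin n → ℝ) (r₀ : EuclideanSpace ℝ (Fin n)) (k : ℕ) (t : ℝ) :
    HasDerivAt (fun s => Fk l r₀ k s) (Fk l r₀ (k + 1) t) t := by
  let e := PiLp.continuousLinearEquiv 2 ℝ (fun _ : Fin n => ℝ)
  have hg : HasDerivAt (fun s => (fun i => l i ^ k * Real.exp (l i * s) * r₀ i : Fin n → ℝ))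
      (fun i => l i ^ (k + 1) * Real.exp (l i * t) * r₀ i) t := by
    rw [hasDerivAt_pi]
    intro i
    have h1 : HasDerivAt (fun s : ℝ => Real.exp (l i * s)) (Real.exp (l i * t) * l i) t := by
      simpa using ((hasDerivAt_id t).const_mul (l i)).exp
    have h2 := (h1.const_mul (l i ^ k)).mul_const (r₀ i)
    convert h2 using 1
    · rfl
    ring
  exact (e.symm.toContinuousLinearMap.hasFDerivAt.comp_hasDerivAt t hg)

lemma traj_eq (l : Fin n → ℝ) (r₀ : EuclideanSpace ℝ (Fin n)) :
    traj (Matrix.diagonal l) r₀ = fun t => Fk l r₀ 0 t := by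
  funext t
  have hexp : NormedSpace.exp (t • Matrix.diagonal l)
      = Matrix.diagonal (fun i => Real.exp (l i * t)) := by
    rw [← Matrix.diagonal_smul, Matrix.exp_diagonal]
    funext i
    simp [Pi.exp_def, Real.exp_eq_exp_ℝ, mul_comm]
  rw [traj, hexp]
  apply (WithLp.equiv 2 (Fin n → ℝ)).injective
  funext i
  rw [WithLp.equiv_apply, Matrix.ofLp_toEuclideanLin_apply]
  simp [Matrix.mulVec_diagonal, Fk]

lemma iteratedDeriv_traj (l : Fin n → ℝ) (r₀ : EuclideanSpace ℝ (Fin n)) (k : ℕ) :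
    iteratedDeriv k (traj (Matrix.diagonal l) r₀) = fun t => Fk l r₀ k t := by
  induction k with
  | zero => simpa [iteratedDeriv_zero] using traj_eq l r₀
  | succ m ih =>
    funext t
    rw [iteratedDeriv_succ, ih]
    exact (hasDerivAt_Fk l r₀ m t).deriv

end aux

lemma lagrange {n : ℕ} (a b : Fin n → ℝ) :
    (∑ i, a i ^ 2) * (∑ i, b i ^ 2) - (∑ i, a i * b i) ^ 2 =
      ∑ i, ∑ j ∈ Finset.Ioi i, (a i * b j - a j * b i) ^ 2 := by
  have h := Finset.sum_sum_Ioi_add_eq_sum_sum_off_diag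
    (fun j i => (a j * b i - a i * b j) ^ 2)
  have hL : ∑ i, ∑ j ∈ Finset.Ioi i,
      ((a j * b i - a i * b j) ^ 2 + (a i * b j - a j * b i) ^ 2)
      = 2 * ∑ i, ∑ j ∈ Finset.Ioi i, (a i * b j - a j * b i) ^ 2 := by
    rw [Finset.mul_sum]
    refine Finset.sum_congr rfl fun i _ => ?_
    rw [Finset.mul_sum]
    exact Finset.sum_congr rfl fun j _ => by ring
  have hfull : (∑ i : Fin n, ∑ j, (a j * b i - a i * b j) ^ 2)
      = 2 * ((∑ i, a i ^ 2) * (∑ i, b i ^ 2) - (∑ i, a i * b i) ^ 2) := by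
    have e1 : ∀ i j : Fin n, (a j * b i - a i * b j) ^ 2
        = a j ^ 2 * b i ^ 2 + a i ^ 2 * b j ^ 2 - 2 * ((a i * b i) * (a j * b j)) :=
      fun i j => by ring
    have hX : (∑ i : Fin n, ∑ j, a j ^ 2 * b i ^ 2)
        = (∑ i, a i ^ 2) * (∑ i, b i ^ 2) := by
      rw [Finset.sum_comm, Finset.sum_mul_sum]
    have hY : (∑ i : Fin n, ∑ j, a i ^ 2 * b j ^ 2)
        = (∑ i, a i ^ 2) * (∑ i, b i ^ 2) := by
      rw [Finset.sum_mul_sum]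
    have hZ : (∑ i : Fin n, ∑ j, (a i * b i) * (a j * b j))
        = (∑ i, a i * b i) ^ 2 := by
      rw [sq, Finset.sum_mul_sum]
    calc (∑ i : Fin n, ∑ j, (a j * b i - a i * b j) ^ 2)
        = ∑ i : Fin n, ∑ j, (a j ^ 2 * b i ^ 2 + a i ^ 2 * b j ^ 2
            - 2 * ((a i * b i) * (a j * b j))) :=
          Finset.sum_congr rfl fun i _ => Finset.sum_congr rfl fun j _ => e1 i j
      _ = (∑ i : Fin n, ∑ j, a j ^ 2 * b i ^ 2) + (∑ i : Fin n, ∑ j, a i ^ 2 * b j ^ 2)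
            - 2 * (∑ i : Fin n, ∑ j, (a i * b i) * (a j * b j)) := by
          simp [Finset.sum_add_distrib, Finset.sum_sub_distrib, Finset.mul_sum]
      _ = 2 * ((∑ i, a i ^ 2) * (∑ i, b i ^ 2) - (∑ i, a i * b i) ^ 2) := by
          rw [hX, hY, hZ]; ring
  rw [hL] at h
  simp only [Finset.compl_singleton] at h
  have h2 : 2 * (∑ i, ∑ j ∈ Finset.Ioi i, (a i * b j - a j * b i) ^ 2)
      = ∑ i : Fin n, ∑ j, (a j * b i - a i * b j) ^ 2 := by
    rw [h]
    refine Finset.sum_congr rfl fun i _ => ?_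
    refine (Finset.sum_subset (Finset.subset_univ _) fun x _ hx => ?_).symm.symm
    have hxi : x = i := by simpa using hx
    simp [hxi]
  rw [hfull] at h2
  linarith

/-- Explicit formula for the square of the first curvature of a trajectory of a diagonal
system with all initial coordinates nonzero. -/
theorem first_curvature_diagonal (n : ℕ) (l : Fin n → ℝ)
    (r₀ : EuclideanSpace ℝ (Fin n)) (h₀ : ∀ i, r₀ i ≠ 0)
    (hdist : ∃ i j : Fin n, l i ≠ l j ∧ l i ≠ 0 ∧ l j ≠ 0) :
    ∀ t : ℝ,
      (curv (traj (Matrix.diagonal l) r₀) 1 t) ^ 2 =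
        (∑ i : Fin n, ∑ j ∈ Finset.Ioi i,
            (l i * l j * (l j - l i) * r₀ i * r₀ j) ^ 2 * Real.exp (2 * (l i + l j) * t)) /
          (∑ k : Fin n, (l k * r₀ k) ^ 2 * Real.exp (2 * l k * t)) ^ 3 := by
  obtain ⟨i₀, j₀, hne, hi₀, hj₀⟩ := hdist
  intro t
  set a : Fin n → ℝ := fun i => l i * Real.exp (l i * t) * r₀ i with ha
  set b : Fin n → ℝ := fun i => l i * a i with hb
  set A : ℝ := ∑ i, a i ^ 2 with hA
  set B : ℝ := ∑ i, a i * b i with hB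
  set C : ℝ := ∑ i, b i ^ 2 with hC
  have hai₀ : a i₀ ≠ 0 := mul_ne_zero (mul_ne_zero hi₀ (Real.exp_ne_zero _)) (h₀ i₀)
  have hApos : 0 < A := Finset.sum_pos' (fun i _ => sq_nonneg _)
    ⟨i₀, Finset.mem_univ _, (sq_nonneg _).lt_of_ne' (pow_ne_zero 2 hai₀)⟩
  have hAne : A ≠ 0 := ne_of_gt hApos
  -- the derivative vectors
  have hv0 : Fk l r₀ 1 t = (WithLp.equiv 2 (Fin n → ℝ)).symm a := by
    apply (WithLp.equiv 2 (Fin n → ℝ)).injective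
    funext i
    simp [Fk, ha]
  have hv1 : Fk l r₀ 2 t = (WithLp.equiv 2 (Fin n → ℝ)).symm b := by
    apply (WithLp.equiv 2 (Fin n → ℝ)).injective
    funext i
    simp [Fk, ha, hb]
    ring
  have hf : (fun k => iteratedDeriv (k + 1) (traj (Matrix.diagonal l) r₀) t)
      = fun k => Fk l r₀ (k + 1) t := by
    funext k; rw [iteratedDeriv_traj]
  have hgs0' : InnerProductSpace.gramSchmidt ℝ (fun k => Fk l r₀ (k + 1) t) 0 = Fk l r₀ 1 t := by
    rw [InnerProductSpace.gramSchmidt_def, show (Finset.Iio 0 : Finset ℕ) = ∅ from rfl, Finset.sum_empty, sub_zero]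
  have gs0 : curvGS (traj (Matrix.diagonal l) r₀) t 0 = Fk l r₀ 1 t := by
    rw [curvGS, hf, hgs0']
  have hinner : ∀ x y : Fin n → ℝ,
      (inner ℝ ((WithLp.equiv 2 (Fin n → ℝ)).symm x) ((WithLp.equiv 2 (Fin n → ℝ)).symm y) : ℝ)
        = ∑ i, x i * y i := by
    intro x y
    simp [PiLp.inner_apply, mul_comm]
  have hnA : ‖Fk l r₀ 1 t‖ ^ 2 = A := by
    rw [← real_inner_self_eq_norm_sq, hv0, hinner, hA]
    exact Finset.sum_congr rfl fun i _ => (sq (a i)).symm ▸ rfl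
  have gs1 : curvGS (traj (Matrix.diagonal l) r₀) t 1
      = Fk l r₀ 2 t - (B / A) • Fk l r₀ 1 t := by
    rw [curvGS, hf, InnerProductSpace.gramSchmidt_def]
    rw [show Finset.Iio 1 = {0} from rfl, Finset.sum_singleton, hgs0']
    rw [Submodule.starProjection_singleton]
    congr 1
    rw [hnA, hv0, hv1, hinner, ← hB]
    norm_cast
  have hBinner : (inner ℝ (Fk l r₀ 1 t) (Fk l r₀ 2 t) : ℝ) = B := by
    rw [hv0, hv1, hinner, hB]
  have hAinner : (inner ℝ (Fk l r₀ 1 t) (Fk l r₀ 1 t) : ℝ) = A := by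
    rw [hv0, hinner, hA]
    exact Finset.sum_congr rfl fun i _ => (sq (a i)).symm ▸ rfl
  have hCinner : (inner ℝ (Fk l r₀ 2 t) (Fk l r₀ 2 t) : ℝ) = C := by
    rw [hv1, hinner, hC]
    exact Finset.sum_congr rfl fun i _ => (sq (b i)).symm ▸ rfl
  have hnorm1 : ‖curvGS (traj (Matrix.diagonal l) r₀) t 1‖ ^ 2 = C - B ^ 2 / A := by
    rw [← real_inner_self_eq_norm_sq, gs1]
    simp only [inner_sub_left, inner_sub_right, real_inner_smul_left, real_inner_smul_right]
    rw [real_inner_comm (Fk l r₀ 1 t) (Fk l r₀ 2 t)]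
    rw [hBinner, hAinner, hCinner]
    field_simp
    ring
  -- numerator and denominator
  have hnum : (∑ i : Fin n, ∑ j ∈ Finset.Ioi i,
      (l i * l j * (l j - l i) * r₀ i * r₀ j) ^ 2 * Real.exp (2 * (l i + l j) * t))
      = A * C - B ^ 2 := by
    rw [hA, hC, hB, lagrange a b]
    refine Finset.sum_congr rfl fun i _ => Finset.sum_congr rfl fun j _ => ?_
    rw [show 2 * (l i + l j) * t = (l i * t + l j * t) + (l i * t + l j * t) by ring,
      Real.exp_add, Real.exp_add]
    simp only [ha, hb]
    ring
  have hden : (∑ k : Fin n, (l k * r₀ k) ^ 2 * Real.exp (2 * l k * t)) = A := by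
    rw [hA]
    refine Finset.sum_congr rfl fun k _ => ?_
    rw [show 2 * l k * t = l k * t + l k * t by ring, Real.exp_add]
    simp only [ha]
    ring
  rw [hnum, hden, curv, gs0]
  rw [div_pow, mul_pow, hnA, hnorm1]
  field_simp
end

section
/- Let A = diag(λ₁,…,λₙ) be a real diagonal matrix, r(t) = e^{tA}r₀ with all coordinates of r₀ nonzero, and κ(t) the first curvature of r. If some eigenvalue λᵢ is positive (i.e. the zero solution of ṙ = Ar is unstable), then lim_{t→∞} κ(t) = 0. Equivalently, if κ(t) does not tend to 0 as t → ∞, then all eigenvalues are ≤ 0 and the zero solution is stable. -/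
open Matrix Filter

/-- Auxiliary: the `k`-th derivative of the diagonal trajectory, written explicitly. -/
noncomputable def gA {n : ℕ} (l : Fin n → ℝ) (r₀ : EuclideanSpace ℝ (Fin n)) (k : ℕ) (t : ℝ) :
    EuclideanSpace ℝ (Fin n) :=
  (WithLp.equiv 2 (Fin n → ℝ)).symm (fun i => (l i) ^ k * Real.exp (t * l i) * r₀ i)

theorem gA_apply {n : ℕ} (l : Fin n → ℝ) (r₀ : EuclideanSpace ℝ (Fin n)) (k : ℕ) (t : ℝ)
    (i : Fin n) : gA l r₀ k t i = (l i) ^ k * Real.exp (t * l i) * r₀ i := rfl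

theorem gA_hasDerivAt {n : ℕ} (l : Fin n → ℝ) (r₀ : EuclideanSpace ℝ (Fin n)) (k : ℕ) (t : ℝ) :
    HasDerivAt (gA l r₀ k) (gA l r₀ (k+1) t) t := by
  have h : HasDerivAt (fun s => (EuclideanSpace.equiv (Fin n) ℝ) (gA l r₀ k s))
      ((EuclideanSpace.equiv (Fin n) ℝ) (gA l r₀ (k+1) t)) t := by
    rw [hasDerivAt_pi]
    intro i
    have h1 : HasDerivAt (fun s : ℝ => s * l i) (l i) t := by
      simpa using (hasDerivAt_id t).mul_const (l i)
    have h2 := (h1.exp.const_mul ((l i)^k)).mul_const (r₀ i)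
    convert h2 using 1
    · rfl
    · rfl
    show l i ^ (k + 1) * Real.exp (t * l i) * r₀ i = _
    ring
  have := ((EuclideanSpace.equiv (Fin n) ℝ).symm.toContinuousLinearMap.hasFDerivAt).comp_hasDerivAt t h
  simpa [Function.comp_def] using this

theorem traj_diag_eq {n : ℕ} (l : Fin n → ℝ) (r₀ : EuclideanSpace ℝ (Fin n)) :
    traj (Matrix.diagonal l) r₀ = gA l r₀ 0 := by
  funext t
  apply (WithLp.equiv 2 (Fin n → ℝ)).injective
  funext i
  show traj (Matrix.diagonal l) r₀ t i = gA l r₀ 0 t i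
  rw [traj, ← Matrix.diagonal_smul, Matrix.exp_diagonal, Matrix.toEuclideanLin_apply, gA_apply]
  simp [Matrix.mulVec_diagonal, Pi.exp_def, ← Real.exp_eq_exp_ℝ]

theorem iteratedDeriv_traj_diag {n : ℕ} (l : Fin n → ℝ) (r₀ : EuclideanSpace ℝ (Fin n)) (k : ℕ) :
    iteratedDeriv k (traj (Matrix.diagonal l) r₀) = gA l r₀ k := by
  induction k with
  | zero => simpa [iteratedDeriv_zero] using traj_diag_eq l r₀
  | succ m ih =>
    rw [iteratedDeriv_succ, ih]
    funext t
    exact (gA_hasDerivAt l r₀ m t).deriv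

theorem abs_apply_le_norm {n : ℕ} (x : EuclideanSpace ℝ (Fin n)) (i : Fin n) : |x i| ≤ ‖x‖ := by
  rw [EuclideanSpace.norm_eq, ← Real.sqrt_sq_eq_abs]
  apply Real.sqrt_le_sqrt
  have := Finset.single_le_sum (f := fun j => ‖x j‖ ^ 2)
    (fun j _ => sq_nonneg _) (Finset.mem_univ i)
  simpa [Real.norm_eq_abs, sq_abs] using this

theorem norm_le_sqrt_sum {n : ℕ} (x : EuclideanSpace ℝ (Fin n)) (M : Fin n → ℝ)
    (h : ∀ i, |x i| ≤ M i) : ‖x‖ ≤ Real.sqrt (∑ i, M i ^ 2) := by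
  rw [EuclideanSpace.norm_eq]
  apply Real.sqrt_le_sqrt
  apply Finset.sum_le_sum
  intro i _
  have : ‖x i‖ = |x i| := rfl
  rw [this, ← sq_abs (M i)]
  exact pow_le_pow_left₀ (abs_nonneg _) ((h i).trans (le_abs_self _)) 2

theorem norm_gramSchmidt_one_le {E : Type*} [NormedAddCommGroup E] [InnerProductSpace ℝ E]
    (f : ℕ → E) : ‖InnerProductSpace.gramSchmidt ℝ f 1‖ ≤ ‖f 1‖ := by
  have hd : f 1 = InnerProductSpace.gramSchmidt ℝ f 1 +
      ((ℝ ∙ InnerProductSpace.gramSchmidt ℝ f 0).starProjection (f 1) : E) := by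
    have := InnerProductSpace.gramSchmidt_def' ℝ f 1
    rwa [show Finset.Iio 1 = {0} from rfl, Finset.sum_singleton] at this
  set g := InnerProductSpace.gramSchmidt ℝ f 1
  set p := ((ℝ ∙ InnerProductSpace.gramSchmidt ℝ f 0).starProjection (f 1) : E)
  have hp : p ∈ (ℝ ∙ InnerProductSpace.gramSchmidt ℝ f 0) := Submodule.starProjection_apply_mem _ _
  obtain ⟨c, hc⟩ := Submodule.mem_span_singleton.1 hp
  have horth : @inner ℝ _ _ g p = 0 := by
    rw [← hc, real_inner_smul_right,
      InnerProductSpace.gramSchmidt_orthogonal ℝ f (show (1:ℕ) ≠ 0 from one_ne_zero), mul_zero]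
  have hsq : ‖f 1‖ ^ 2 = ‖g‖ ^ 2 + ‖p‖ ^ 2 := by
    rw [hd, norm_add_sq_real, horth]; ring
  nlinarith [norm_nonneg g, norm_nonneg p, norm_nonneg (f 1), sq_nonneg (‖f 1‖ - ‖g‖)]

/-- For a diagonal system, if some eigenvalue is positive (so the zero solution is unstable),
then the first curvature of each trajectory with all initial coordinates nonzero tends to `0`;
equivalently, if the curvature does not tend to `0`, then all eigenvalues are `≤ 0`
and the zero solution is stable. -/
theorem curvature_vanishes_of_unstable_diagonal (n : ℕ) (l : Fin n → ℝ)
    (r₀ : EuclideanSpace ℝ (Fin n)) (h₀ : ∀ i, r₀ i ≠ 0) :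
    ((∃ i, 0 < l i) → Tendsto (curv (traj (Matrix.diagonal l) r₀) 1) atTop (nhds 0)) ∧
    (¬ Tendsto (curv (traj (Matrix.diagonal l) r₀) 1) atTop (nhds 0) → ∀ i, l i ≤ 0) := by
  have main : (∃ i, 0 < l i) → Tendsto (curv (traj (Matrix.diagonal l) r₀) 1) atTop (nhds 0) := by
    rintro ⟨i₀, hi₀⟩
    have : Nonempty (Fin n) := ⟨i₀⟩
    obtain ⟨I, hI⟩ := Finite.exists_max l
    have hL : 0 < l I := lt_of_lt_of_le hi₀ (hI i₀)
    set r := traj (Matrix.diagonal l) r₀ with hr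
    set c : ℝ := |l I * r₀ I| with hcdef
    have hc : 0 < c := abs_pos.2 (mul_ne_zero (ne_of_gt hL) (h₀ I))
    set C : ℝ := Real.sqrt (∑ i, (l i ^ 2 * |r₀ i|) ^ 2) with hCdef
    have hC : 0 ≤ C := Real.sqrt_nonneg _
    have hgs0 : ∀ t, curvGS r t 0 = gA l r₀ 1 t := by
      intro t
      have : curvGS r t 0 = (fun k => iteratedDeriv (k + 1) r t) 0 :=
        InnerProductSpace.gramSchmidt_bot ℝ (fun k => iteratedDeriv (k + 1) r t)
      rw [this]
      simp only [zero_add, hr, iteratedDeriv_traj_diag]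
    have hgs1 : ∀ t, ‖curvGS r t 1‖ ≤ ‖gA l r₀ 2 t‖ := by
      intro t
      have := norm_gramSchmidt_one_le (fun k => iteratedDeriv (k + 1) r t)
      rw [curvGS]
      convert this using 3
      · rfl
      simp only [hr, iteratedDeriv_traj_diag]
    -- lower bound on ‖curvGS r t 0‖
    have hlow : ∀ t : ℝ, c * Real.exp (t * l I) ≤ ‖curvGS r t 0‖ := by
      intro t
      rw [hgs0]
      have := abs_apply_le_norm (gA l r₀ 1 t) I
      rw [gA_apply] at this
      calc c * Real.exp (t * l I) = |l I ^ 1 * Real.exp (t * l I) * r₀ I| := by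
            rw [abs_mul, abs_mul, pow_one, Real.abs_exp, hcdef, abs_mul]; ring
        _ ≤ _ := this
    -- upper bound on ‖curvGS r t 1‖ for t ≥ 0
    have hup : ∀ t : ℝ, 0 ≤ t → ‖curvGS r t 1‖ ≤ C * Real.exp (t * l I) := by
      intro t ht
      refine (hgs1 t).trans ?_
      have hb : ∀ i, |gA l r₀ 2 t i| ≤ l i ^ 2 * |r₀ i| * Real.exp (t * l I) := by
        intro i
        rw [gA_apply, abs_mul, abs_mul, Real.abs_exp, abs_pow, sq_abs]
        have hexp : Real.exp (t * l i) ≤ Real.exp (t * l I) :=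
          Real.exp_le_exp.2 (mul_le_mul_of_nonneg_left (hI i) ht)
        have h1 : 0 ≤ l i ^ 2 * |r₀ i| := mul_nonneg (sq_nonneg _) (abs_nonneg _)
        calc l i ^ 2 * Real.exp (t * l i) * |r₀ i|
            = l i ^ 2 * |r₀ i| * Real.exp (t * l i) := by ring
          _ ≤ l i ^ 2 * |r₀ i| * Real.exp (t * l I) :=
              mul_le_mul_of_nonneg_left hexp h1
      refine (norm_le_sqrt_sum _ _ hb).trans_eq ?_
      have : ∀ i : Fin n, (l i ^ 2 * |r₀ i| * Real.exp (t * l I)) ^ 2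
          = (l i ^ 2 * |r₀ i|) ^ 2 * Real.exp (t * l I) ^ 2 := fun i => by ring
      rw [Finset.sum_congr rfl (fun i _ => this i), ← Finset.sum_mul,
        Real.sqrt_mul (Finset.sum_nonneg fun i _ => sq_nonneg _),
        Real.sqrt_sq (Real.exp_nonneg _), hCdef]
    -- squeeze
    have hbound : ∀ t : ℝ, 0 ≤ t →
        curv r 1 t ≤ (C / (c * c)) * Real.exp (-(t * l I)) := by
      intro t ht
      have hE : 0 < Real.exp (t * l I) := Real.exp_pos _
      have hden : 0 < c * Real.exp (t * l I) := mul_pos hc hE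
      have h1 : curv r 1 t ≤ (C * Real.exp (t * l I)) /
          ((c * Real.exp (t * l I)) * (c * Real.exp (t * l I))) := by
        rw [curv]
        simp only [Nat.sub_self]
        exact div_le_div₀ (mul_nonneg hC hE.le) (hup t ht) (mul_pos hden hden)
          (mul_le_mul (hlow t) (hlow t) hden.le (norm_nonneg _))
      refine h1.trans_eq ?_
      rw [Real.exp_neg]
      field_simp
    have hub : Tendsto (fun t : ℝ => (C / (c * c)) * Real.exp (-(t * l I))) atTop (nhds 0) := by
      have h2 : Tendsto (fun t : ℝ => Real.exp (-(t * l I))) atTop (nhds 0) := by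
        simp_rw [Real.exp_neg]
        apply Tendsto.inv_tendsto_atTop
        exact Real.tendsto_exp_atTop.comp (Tendsto.atTop_mul_const hL tendsto_id)
      simpa using h2.const_mul (C / (c * c))
    have hlb : Tendsto (fun _ : ℝ => (0:ℝ)) atTop (nhds 0) := tendsto_const_nhds
    refine tendsto_of_tendsto_of_tendsto_of_le_of_le' hlb hub ?_ ?_
    · exact Eventually.of_forall fun t =>
        div_nonneg (norm_nonneg _) (mul_nonneg (norm_nonneg _) (norm_nonneg _))
    · filter_upwards [eventually_ge_atTop (0:ℝ)] with t ht using hbound t ht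
  exact ⟨main, fun h i => not_lt.1 fun hi => h (main ⟨i, hi⟩)⟩
end

section
/- Let A be the p×p Jordan block with real eigenvalue λ and p ≥ 2. The zero solution of ṙ = Ar is asymptotically stable if and only if for some (equivalently, every) initial value r₀ with all coordinates nonzero, the first curvature of the trajectory satisfies lim_{t→∞} κ(t) = +∞. -/
open Matrix Filter

/-- The `p × p` Jordan block with real eigenvalue `l`. -/
def jordanBlock (p : ℕ) (l : ℝ) : Matrix (Fin p) (Fin p) ℝ :=
  Matrix.of fun i j => if (j : ℕ) = (i : ℕ) then l else if (j : ℕ) = (i : ℕ) + 1 then 1 else 0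

/-- Lyapunov stability of the zero solution of `ṙ = A r`. -/
def IsStableZero {n : ℕ} (A : Matrix (Fin n) (Fin n) ℝ) : Prop :=
  ∀ ε : ℝ, 0 < ε → ∃ δ : ℝ, 0 < δ ∧ ∀ r₀ : EuclideanSpace ℝ (Fin n), ‖r₀‖ < δ →
    ∀ t : ℝ, 0 ≤ t → ‖traj A r₀ t‖ < ε

/-- Asymptotic stability of the zero solution of `ṙ = A r`. -/
def IsAsympStableZero {n : ℕ} (A : Matrix (Fin n) (Fin n) ℝ) : Prop :=
  IsStableZero A ∧ ∃ δ : ℝ, 0 < δ ∧ ∀ r₀ : EuclideanSpace ℝ (Fin n), ‖r₀‖ < δ →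
    Filter.Tendsto (traj A r₀) Filter.atTop (nhds 0)

namespace JP
open RealInnerProductSpace InnerProductSpace

attribute [local instance] Matrix.linftyOpNormedAddCommGroup Matrix.linftyOpNormedRing
  Matrix.linftyOpNormedAlgebra
noncomputable section
variable {p : ℕ}
def pad (p : ℕ) (r : EuclideanSpace ℝ (Fin p)) : ℕ → ℝ :=
  fun j => if h : j < p then r ⟨j, h⟩ else 0
def Pol (p : ℕ) (b : ℕ → ℝ) (i : ℕ) (t : ℝ) : ℝ :=
  ∑ k ∈ Finset.range p, t ^ k / (Nat.factorial k) * b (i + k)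
def cve (p : ℕ) (lam : ℝ) (b : ℕ → ℝ) (t : ℝ) : EuclideanSpace ℝ (Fin p) :=
  (WithLp.equiv 2 (Fin p → ℝ)).symm (fun i => Real.exp (lam * t) * Pol p b i t)
@[simp] lemma cve_apply (lam : ℝ) (b : ℕ → ℝ) (t : ℝ) (i : Fin p) :
    cve p lam b t i = Real.exp (lam * t) * Pol p b i t := rfl
def Nmat (p : ℕ) : Matrix (Fin p) (Fin p) ℝ := jordanBlock p 0
lemma jordan_decomp (lam : ℝ) :
    jordanBlock p lam = lam • (1 : Matrix (Fin p) (Fin p) ℝ) + Nmat p := by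
  ext i j
  by_cases h : (j : ℕ) = (i : ℕ)
  · have h2 : i = j := Fin.ext h.symm
    subst h2
    simp [jordanBlock, Nmat, Matrix.one_apply]
  · have h2 : ¬ i = j := fun hc => h (by rw [hc])
    simp [jordanBlock, Nmat, Matrix.one_apply, h, h2]

lemma Nmat_pow (k : ℕ) :
    (Nmat p) ^ k = Matrix.of fun i j : Fin p => if (j : ℕ) = (i : ℕ) + k then (1:ℝ) else 0 := by
  induction k with
  | zero =>
    ext i j
    by_cases h : (j : ℕ) = (i : ℕ)
    · have h2 : i = j := Fin.ext h.symm
      subst h2; simp [Matrix.one_apply]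
    · have h2 : ¬ i = j := fun hc => h (by rw [hc]); simp [Matrix.one_apply, h, h2]
  | succ k ih =>
    ext i j
    rw [pow_succ, ih]
    simp only [Matrix.mul_apply, Matrix.of_apply, Nmat, jordanBlock, Matrix.of_apply, ite_mul,
      one_mul, zero_mul]
    have hsum : ∀ l : Fin p, (if (l : ℕ) = (i : ℕ) + k then
        (if (j:ℕ) = (l:ℕ) then (0:ℝ) else if (j:ℕ) = (l:ℕ) + 1 then 1 else 0) else 0)
        = if (l : ℕ) = (i : ℕ) + k then (if (j:ℕ) = (i:ℕ) + (k+1) then (1:ℝ) else 0) else 0 := by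
      intro l
      by_cases hl : (l : ℕ) = (i : ℕ) + k
      · by_cases hj : (j : ℕ) = (i : ℕ) + k
        · have h4 : ¬ ((j:ℕ) = (i:ℕ) + (k+1)) := by omega
          simp [hl, hj, h4]
        · have h3 : ((j:ℕ) = (i:ℕ)+k+1) ↔ ((j:ℕ) = (i:ℕ)+(k+1)) := by omega
          simp [hl, hj, h3]
      · simp [hl]
    rw [Finset.sum_congr rfl (fun l _ => hsum l)]
    by_cases hik : (i : ℕ) + k < p
    · have : ∀ l : Fin p, ((l : ℕ) = (i : ℕ) + k) ↔ l = ⟨(i:ℕ)+k, hik⟩ := by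
        intro l; constructor
        · intro h; exact Fin.ext h
        · intro h; subst h; rfl
      simp_rw [this]
      rw [Finset.sum_ite_eq' Finset.univ]
      simp
    · have h1 : ∀ l : Fin p, ¬ ((l : ℕ) = (i : ℕ) + k) := by
        intro l hc; exact hik (hc ▸ l.isLt)
      simp only [h1, if_false, Finset.sum_const_zero]
      have : ¬ ((j : ℕ) = (i : ℕ) + (k+1)) := by
        intro hc; have := j.isLt; omega
      rw [if_neg this]


lemma Nmat_pow_eq_zero {n : ℕ} (hn : p ≤ n) : (Nmat p) ^ n = 0 := by
  rw [Nmat_pow]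
  ext i j
  have : ¬ ((j:ℕ) = (i:ℕ) + n) := by have := j.isLt; omega
  simp [this]

lemma exp_tN (t : ℝ) : NormedSpace.exp (t • Nmat p)
    = ∑ k ∈ Finset.range p, (t ^ k / (Nat.factorial k)) • (Nmat p) ^ k := by
  rw [NormedSpace.exp_eq_tsum ℝ]
  have h1 : ∀ n : ℕ, ((Nat.factorial n : ℝ)⁻¹) • (t • Nmat p) ^ n
      = (t ^ n / (Nat.factorial n)) • (Nmat p) ^ n := by
    intro n
    rw [smul_pow, smul_smul]
    congr 1
    ring
  simp_rw [h1]
  exact tsum_eq_sum (fun n hn => by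
    rw [Nmat_pow_eq_zero (by simpa using hn), smul_zero])

lemma exp_tJ (lam t : ℝ) : NormedSpace.exp (t • jordanBlock p lam)
    = Real.exp (t * lam) • ∑ k ∈ Finset.range p, (t ^ k / (Nat.factorial k)) • (Nmat p) ^ k := by
  rw [jordan_decomp lam, smul_add, smul_smul]
  have hc : Commute ((t * lam) • (1 : Matrix (Fin p) (Fin p) ℝ)) (t • Nmat p) :=
    ((Commute.one_left (t • Nmat p)).smul_left _)
  rw [Matrix.exp_add_of_commute _ _ hc, ← exp_tN]
  congr 1
  have : (t * lam) • (1 : Matrix (Fin p) (Fin p) ℝ) = algebraMap ℝ _ (t * lam) := by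
    rw [Algebra.algebraMap_eq_smul_one]
  erw [this, ← NormedSpace.algebraMap_exp_comm, Algebra.algebraMap_eq_smul_one,
    ← Real.exp_eq_exp_ℝ, smul_mul_assoc, one_mul]

lemma exp_tJ_apply (lam t : ℝ) (i j : Fin p) :
    NormedSpace.exp (t • jordanBlock p lam) i j
      = Real.exp (t * lam) * (if (i:ℕ) ≤ (j:ℕ) then t ^ ((j:ℕ) - (i:ℕ)) / (Nat.factorial ((j:ℕ) - (i:ℕ))) else 0) := by
  rw [exp_tJ]
  simp only [Matrix.smul_apply, Matrix.sum_apply, Nmat_pow, Matrix.of_apply, smul_eq_mul,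
    mul_ite, mul_one, mul_zero]
  by_cases h : (i:ℕ) ≤ (j:ℕ)
  · rw [if_pos h]
    congr 1
    rw [Finset.sum_eq_single ((j:ℕ) - (i:ℕ))]
    · simp [Nat.add_sub_cancel' h]
    · intro k _ hk
      have : ¬ ((j:ℕ) = (i:ℕ) + k) := by omega
      simp [this]
    · intro hk
      exfalso; exact hk (Finset.mem_range.2 (by have := j.isLt; omega))
  · rw [if_neg h]
    apply mul_eq_zero_of_right
    apply Finset.sum_eq_zero
    intro k _
    have : ¬ ((j:ℕ) = (i:ℕ) + k) := by omega
    simp [this]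

lemma sum_shift {b : ℕ → ℝ} (hb : ∀ j, p ≤ j → b j = 0) (i : ℕ) (g : ℕ → ℝ) :
    ∑ j ∈ Finset.range p, (if i ≤ j then g (j - i) * b j else 0)
      = ∑ k ∈ Finset.range p, g k * b (i + k) := by
  have h1 : ∑ j ∈ Finset.range p, (if i ≤ j then g (j - i) * b j else 0)
      = ∑ j ∈ Finset.range (i + p), (if i ≤ j then g (j - i) * b j else 0) := by
    apply Finset.sum_subset
    · exact Finset.range_subset_range.2 (Nat.le_add_left p i)
    · intro j _ hj
      rw [hb j (by simpa using hj), mul_zero, ite_self]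
  rw [h1, Finset.sum_range_add]
  have h2 : ∀ j ∈ Finset.range i, (if i ≤ j then g (j - i) * b j else 0) = 0 := by
    intro j hj
    rw [if_neg (by simpa using Nat.not_le.2 (Finset.mem_range.1 hj))]
  rw [Finset.sum_eq_zero h2, zero_add]
  apply Finset.sum_congr rfl
  intro k _
  rw [if_pos (Nat.le_add_right i k), Nat.add_sub_cancel_left]

lemma pad_vanish (r₀ : EuclideanSpace ℝ (Fin p)) : ∀ j, p ≤ j → pad p r₀ j = 0 := by
  intro j hj; simp [pad, Nat.not_lt.2 hj]

lemma traj_eq (lam : ℝ) (r₀ : EuclideanSpace ℝ (Fin p)) :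
    traj (jordanBlock p lam) r₀ = cve p lam (pad p r₀) := by
  funext t
  apply (WithLp.equiv 2 (Fin p → ℝ)).injective
  funext i
  have : (WithLp.equiv 2 (Fin p → ℝ)) (traj (jordanBlock p lam) r₀ t) i
      = ∑ j : Fin p, NormedSpace.exp (t • jordanBlock p lam) i j * r₀ j := by
    rw [traj, Matrix.toEuclideanLin_apply]
    simp [Matrix.mulVec, dotProduct]
  rw [this]
  have hrhs : (WithLp.equiv 2 (Fin p → ℝ)) (cve p lam (pad p r₀) t) i
      = Real.exp (lam * t) * Pol p (pad p r₀) i t := rfl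
  rw [hrhs]
  have hpad : ∀ x : Fin p, r₀ x = pad p r₀ ↑x := fun x => by simp [pad, x.isLt]
  calc ∑ j : Fin p, NormedSpace.exp (t • jordanBlock p lam) i j * r₀ j
      = Real.exp (t*lam) * ∑ j : Fin p, (if (i:ℕ) ≤ (j:ℕ) then
          t ^ ((j:ℕ)-(i:ℕ)) / (Nat.factorial ((j:ℕ)-(i:ℕ))) * pad p r₀ (j:ℕ) else 0) := by
        rw [Finset.mul_sum]
        apply Finset.sum_congr rfl
        intro j _
        rw [exp_tJ_apply, hpad j, mul_assoc, ite_mul, zero_mul]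
    _ = Real.exp (lam*t) * Pol p (pad p r₀) (i:ℕ) t := by
        rw [mul_comm t lam]
        congr 1
        rw [Fin.sum_univ_eq_sum_range (fun n => if (i:ℕ) ≤ n then
          t ^ (n-(i:ℕ)) / (Nat.factorial (n-(i:ℕ))) * pad p r₀ n else 0) p]
        exact sum_shift (pad_vanish r₀) (i:ℕ) (fun k => t^k / (Nat.factorial k))


def sh (b : ℕ → ℝ) : ℕ → ℝ := fun j => b (j + 1)
def Lop (lam : ℝ) (b : ℕ → ℝ) : ℕ → ℝ := fun j => lam * b j + b (j + 1)

lemma Lop_vanish {b : ℕ → ℝ} (lam : ℝ) (hb : ∀ j, p ≤ j → b j = 0) :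
    ∀ j, p ≤ j → Lop lam b j = 0 := by
  intro j hj
  simp [Lop, hb j hj, hb (j+1) (le_trans hj (Nat.le_succ j))]

lemma Pol_Lop {b : ℕ → ℝ} (lam : ℝ) (i : ℕ) (t : ℝ) :
    Pol p (Lop lam b) i t = lam * Pol p b i t + Pol p (sh b) i t := by
  simp only [Pol, Lop, sh, Finset.mul_sum, ← Finset.sum_add_distrib]
  apply Finset.sum_congr rfl
  intro k _
  ring

lemma hasDerivAt_Pol (hp : 0 < p) {b : ℕ → ℝ} (hb : ∀ j, p ≤ j → b j = 0) (i : ℕ) (t : ℝ) :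
    HasDerivAt (fun s => Pol p b i s) (Pol p (sh b) i t) t := by
  obtain ⟨m, rfl⟩ : ∃ m, p = m + 1 := ⟨p - 1, by omega⟩
  have h : HasDerivAt (fun s => Pol (m+1) b i s)
      (∑ k ∈ Finset.range (m+1), (k : ℝ) * t ^ (k-1) * (b (i + k) / (Nat.factorial k))) t := by
    apply HasDerivAt.fun_sum
    intro k _
    have h1 : HasDerivAt (fun s : ℝ => s ^ k * (b (i + k) / (Nat.factorial k)))
        ((k : ℝ) * t ^ (k-1) * (b (i + k) / (Nat.factorial k))) t :=
      (hasDerivAt_pow k t).mul_const _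
    apply h1.congr_of_eventuallyEq
    filter_upwards with s
    ring
  convert h using 1
  rw [Finset.sum_range_succ' _ m]
  simp only [Nat.cast_zero, zero_mul, mul_zero, zero_mul, add_zero]
  rw [Pol, Finset.sum_range_succ]
  have hlast : t ^ m / (Nat.factorial m) * sh b (i + m) = 0 := by
    have : b (i + m + 1) = 0 := hb _ (by omega)
    simp [sh, this]
  rw [hlast, add_zero]
  apply Finset.sum_congr rfl
  intro k _
  simp only [sh]
  rw [Nat.factorial_succ]
  push_cast
  have hk : (Nat.factorial k : ℝ) ≠ 0 := Nat.cast_ne_zero.2 (Nat.factorial_ne_zero k)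
  field_simp
  ring_nf

lemma hasDerivAt_cve (hp : 0 < p) (lam : ℝ) {b : ℕ → ℝ} (hb : ∀ j, p ≤ j → b j = 0) (t : ℝ) :
    HasDerivAt (cve p lam b) (cve p lam (Lop lam b) t) t := by
  have hco : ∀ i : Fin p, HasDerivAt (fun s => Real.exp (lam * s) * Pol p b (i:ℕ) s)
      (Real.exp (lam * t) * Pol p (Lop lam b) (i:ℕ) t) t := by
    intro i
    have h1 : HasDerivAt (fun s : ℝ => Real.exp (lam * s)) (Real.exp (lam * t) * lam) t := by
      have := ((hasDerivAt_id t).const_mul lam).exp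
      simpa using this
    have h2 := hasDerivAt_Pol hp hb (i:ℕ) t
    have := h1.mul h2
    refine this.congr_deriv ?_
    rw [Pol_Lop]
    ring
  have hg : HasDerivAt (fun s => (fun i : Fin p => Real.exp (lam * s) * Pol p b (i:ℕ) s))
      (fun i : Fin p => Real.exp (lam * t) * Pol p (Lop lam b) (i:ℕ) t) t := hasDerivAt_pi.2 hco
  exact ((PiLp.continuousLinearEquiv 2 ℝ (fun _ : Fin p => ℝ)).symm.toContinuousLinearMap
    |>.hasFDerivAt.comp_hasDerivAt t hg)

lemma deriv_cve (hp : 0 < p) (lam : ℝ) {b : ℕ → ℝ} (hb : ∀ j, p ≤ j → b j = 0) :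
    deriv (cve p lam b) = cve p lam (Lop lam b) :=
  funext fun t => (hasDerivAt_cve hp lam hb t).deriv


lemma abs_coord_le (x : EuclideanSpace ℝ (Fin p)) (i : Fin p) : |x i| ≤ ‖x‖ := by
  rw [EuclideanSpace.norm_eq]
  rw [show |x i| = Real.sqrt ((x i)^2) by rw [Real.sqrt_sq_eq_abs]]
  apply Real.sqrt_le_sqrt
  have : (x i)^2 = ‖x i‖^2 := by rw [Real.norm_eq_abs, sq_abs]
  rw [this]
  exact Finset.single_le_sum (f := fun j => ‖x j‖^2) (fun j _ => sq_nonneg _) (Finset.mem_univ i)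

lemma two_coord_le (x : EuclideanSpace ℝ (Fin p)) {i j : Fin p} (hij : i ≠ j) :
    (x i)^2 + (x j)^2 ≤ ‖x‖^2 := by
  rw [EuclideanSpace.norm_eq, Real.sq_sqrt (Finset.sum_nonneg fun _ _ => sq_nonneg _)]
  have h : ({i, j} : Finset (Fin p)) ⊆ Finset.univ := Finset.subset_univ _
  have := Finset.sum_le_sum_of_subset_of_nonneg h
    (fun k _ _ => sq_nonneg (‖x k‖))
  calc (x i)^2 + (x j)^2 = ∑ k ∈ ({i, j} : Finset (Fin p)), ‖x k‖^2 := by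
        rw [Finset.sum_pair hij]
        simp [Real.norm_eq_abs, sq_abs]
    _ ≤ ∑ k, ‖x k‖^2 := this

lemma euclid_norm_le {B : ℝ} (hB : 0 ≤ B) (x : EuclideanSpace ℝ (Fin p))
    (h : ∀ i, |x i| ≤ B) : ‖x‖ ≤ Real.sqrt p * B := by
  rw [EuclideanSpace.norm_eq]
  have h1 : ∑ i, ‖x i‖^2 ≤ (p : ℝ) * B^2 := by
    calc ∑ i, ‖x i‖^2 ≤ ∑ _i : Fin p, B^2 := by
          apply Finset.sum_le_sum
          intro i _
          exact pow_le_pow_left₀ (abs_nonneg _) (h i) 2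
      _ = (p : ℝ) * B^2 := by simp [mul_comm]
  calc Real.sqrt (∑ i, ‖x i‖^2) ≤ Real.sqrt ((p:ℝ) * B^2) := Real.sqrt_le_sqrt h1
    _ = Real.sqrt p * B := by
        rw [Real.sqrt_mul (Nat.cast_nonneg p), Real.sqrt_sq hB]

lemma Pol_abs_le {b : ℕ → ℝ} {q : ℕ} (hq : 0 < q) (hb : ∀ j, q ≤ j → b j = 0)
    (i : ℕ) {t : ℝ} (ht : 0 ≤ t) :
    |Pol p b i t| ≤ (p : ℝ) * (∑ j ∈ Finset.range q, |b j|) * (1+t)^(q-1) := by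
  set M := ∑ j ∈ Finset.range q, |b j| with hM
  have hM0 : 0 ≤ M := Finset.sum_nonneg fun _ _ => abs_nonneg _
  have h1t : (0:ℝ) ≤ 1 + t := by linarith
  have hterm : ∀ k ∈ Finset.range p, |t ^ k / (Nat.factorial k) * b (i + k)| ≤ M * (1+t)^(q-1) := by
    intro k hk
    by_cases hik : i + k < q
    · rw [abs_mul, abs_div]
      have h1 : |t ^ k| ≤ (1+t)^(q-1) := by
        rw [abs_pow, abs_of_nonneg ht]
        calc t^k ≤ (1+t)^k := pow_le_pow_left₀ ht (by linarith) k
          _ ≤ (1+t)^(q-1) := pow_le_pow_right₀ (by linarith) (by omega)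
      have h2 : |b (i + k)| ≤ M :=
        Finset.single_le_sum (f := fun j => |b j|) (fun j _ => abs_nonneg _)
          (Finset.mem_range.2 hik)
      have h3 : |t^k| / |(Nat.factorial k : ℝ)| ≤ |t^k| := by
        apply div_le_self (abs_nonneg _)
        rw [abs_of_nonneg (Nat.cast_nonneg _)]
        exact_mod_cast Nat.one_le_iff_ne_zero.2 (Nat.factorial_ne_zero k)
      calc |t^k| / |(Nat.factorial k : ℝ)| * |b (i+k)| ≤ |t^k| * M := by
            apply mul_le_mul h3 h2 (abs_nonneg _) (abs_nonneg _)
        _ ≤ (1+t)^(q-1) * M := by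
            apply mul_le_mul_of_nonneg_right h1 hM0
        _ = M * (1+t)^(q-1) := mul_comm _ _
    · rw [hb _ (Nat.not_lt.1 hik), mul_zero, abs_zero]
      positivity
  calc |Pol p b i t| ≤ ∑ k ∈ Finset.range p, |t ^ k / (Nat.factorial k) * b (i + k)| :=
        Finset.abs_sum_le_sum_abs _ _
    _ ≤ ∑ _k ∈ Finset.range p, M * (1+t)^(q-1) := Finset.sum_le_sum hterm
    _ = (p : ℝ) * M * (1+t)^(q-1) := by
        rw [Finset.sum_const, Finset.card_range, nsmul_eq_mul]; ring

lemma cve_norm_le {b : ℕ → ℝ} {q : ℕ} (lam : ℝ) (hq : 0 < q) (hb : ∀ j, q ≤ j → b j = 0)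
    {t : ℝ} (ht : 0 ≤ t) :
    ‖cve p lam b t‖ ≤ Real.sqrt p *
      (Real.exp (lam * t) * ((p : ℝ) * (∑ j ∈ Finset.range q, |b j|) * (1+t)^(q-1))) := by
  apply euclid_norm_le (by positivity)
  intro i
  rw [cve_apply, abs_mul, abs_of_nonneg (Real.exp_nonneg _)]
  exact mul_le_mul_of_nonneg_left (Pol_abs_le hq hb _ ht) (Real.exp_nonneg _)

lemma tendsto_exp_poly (n : ℕ) {bb : ℝ} (hbb : 0 < bb) :
    Filter.Tendsto (fun t : ℝ => Real.exp (bb*t) / (1+t)^n) Filter.atTop Filter.atTop := by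
  have h0 : Filter.Tendsto (fun t : ℝ => bb * (1+t)) Filter.atTop Filter.atTop := by
    apply Filter.Tendsto.const_mul_atTop hbb
    exact tendsto_atTop_add_const_left _ 1 tendsto_id
  have h1 : Filter.Tendsto (fun t : ℝ => Real.exp (bb*(1+t)) / (bb*(1+t))^n)
      Filter.atTop Filter.atTop := (Real.tendsto_exp_div_pow_atTop n).comp h0
  have h2 := h1.const_mul_atTop (show (0:ℝ) < Real.exp (-bb) * bb^n by positivity)
  apply h2.congr'
  filter_upwards [Filter.eventually_ge_atTop (0:ℝ)] with t ht
  have h1t : (0:ℝ) < 1 + t := by linarith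
  show Real.exp (-bb) * bb^n * (Real.exp (bb*(1+t)) / (bb*(1+t))^n) = _
  rw [show bb*(1+t) = bb + bb*t by ring, Real.exp_add]
  rw [show bb + bb*t = bb*(1+t) by ring, mul_pow, Real.exp_neg]
  have e1 : Real.exp bb ≠ 0 := Real.exp_ne_zero bb
  have e2 : bb ^ n ≠ 0 := pow_ne_zero n hbb.ne'
  have e3 : (1+t)^n ≠ 0 := pow_ne_zero n h1t.ne'
  field_simp

lemma tendsto_poly_exp (n : ℕ) {bb : ℝ} (hbb : 0 < bb) :
    Filter.Tendsto (fun t : ℝ => (1+t)^n * Real.exp (-(bb*t))) Filter.atTop (nhds 0) := by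
  have h0 : Filter.Tendsto (fun t : ℝ => bb * (1+t)) Filter.atTop Filter.atTop := by
    apply Filter.Tendsto.const_mul_atTop hbb
    exact tendsto_atTop_add_const_left _ 1 tendsto_id
  have h1 : Filter.Tendsto (fun t : ℝ => (bb*(1+t))^n * Real.exp (-(bb*(1+t))))
      Filter.atTop (nhds 0) := by
    have := (Real.tendsto_pow_mul_exp_neg_atTop_nhds_zero n).comp h0
    simpa [Function.comp_def] using this
  have h2 := h1.const_mul (Real.exp bb / bb^n)
  rw [mul_zero] at h2
  apply h2.congr
  intro t
  show Real.exp bb / bb^n * ((bb*(1+t))^n * Real.exp (-(bb*(1+t)))) = _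
  rw [show -(bb*(1+t)) = -bb + -(bb*t) by ring, Real.exp_add, mul_pow, Real.exp_neg bb]
  have e1 : Real.exp bb ≠ 0 := Real.exp_ne_zero bb
  have e2 : bb ^ n ≠ 0 := pow_ne_zero n hbb.ne'
  field_simp

lemma Pol_top {b : ℕ → ℝ} {m : ℕ} (hb : ∀ j, m + 1 ≤ j → b j = 0) (hm : m < p) (t : ℝ) :
    Pol p b m t = b m := by
  rw [Pol, Finset.sum_eq_single 0]
  · simp
  · intro k _ hk
    rw [hb (m + k) (by omega), mul_zero]
  · intro h
    exact absurd (Finset.mem_range.2 (by omega)) h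

lemma Pol_top2 {b : ℕ → ℝ} {m : ℕ} (hb : ∀ j, m + 2 ≤ j → b j = 0) (hm : m + 1 < p) (t : ℝ) :
    Pol p b m t = b m + t * b (m + 1) := by
  rw [Pol, ← Finset.sum_subset (s₁ := ({0, 1} : Finset ℕ))]
  · rw [Finset.sum_pair (by norm_num : (0:ℕ) ≠ 1)]
    simp [Nat.factorial]
  · intro k hk
    rcases Finset.mem_insert.1 hk with h | h
    · exact Finset.mem_range.2 (by omega)
    · rw [Finset.mem_singleton.1 h]; exact Finset.mem_range.2 (by omega)
  · intro k _ hk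
    have hk2 : 2 ≤ k := by
      simp only [Finset.mem_insert, Finset.mem_singleton] at hk
      omega
    rw [hb (m + k) (by omega), mul_zero]

lemma twoD (x1 x2 y1 y2 : ℝ) : (x1*y2 - x2*y1)^2 ≤ (x1^2+x2^2)*(y1^2+y2^2) := by
  nlinarith [sq_nonneg (x1*y1 + x2*y2)]

lemma cross_lower (u w : EuclideanSpace ℝ (Fin p)) (c : ℝ) {i j : Fin p} (hij : i ≠ j) :
    |u i * w j - u j * w i| ≤ ‖w - c • u‖ * ‖u‖ := by
  set v := w - c • u with hv
  have hvi : ∀ k : Fin p, v k = w k - c * u k := fun k => rfl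
  have key : (u i * w j - u j * w i)^2 ≤ (‖v‖ * ‖u‖)^2 := by
    have h1 : u i * w j - u j * w i = v j * u i - v i * u j := by
      rw [hvi, hvi]; ring
    rw [h1, mul_pow]
    calc (v j * u i - v i * u j)^2 ≤ (v j^2 + v i^2)*(u j^2 + u i^2) := twoD _ _ _ _
      _ ≤ ‖v‖^2 * ‖u‖^2 := by
          apply mul_le_mul
          · have := two_coord_le v (Ne.symm hij); linarith
          · have := two_coord_le u (Ne.symm hij); linarith
          · positivity
          · positivity
  have hnn : 0 ≤ ‖v‖ * ‖u‖ := by positivity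
  nlinarith [abs_nonneg (u i * w j - u j * w i), sq_abs (u i * w j - u j * w i)]


lemma gs_zero (f : ℕ → EuclideanSpace ℝ (Fin p)) : gramSchmidt ℝ f 0 = f 0 := by
  have := gramSchmidt_bot (𝕜 := ℝ) (ι := ℕ) f
  simpa using this

lemma gs_one (f : ℕ → EuclideanSpace ℝ (Fin p)) :
    gramSchmidt ℝ f 1 = f 1 - (⟪f 0, f 1⟫ / ‖f 0‖^2) • f 0 := by
  have h := gramSchmidt_def'' ℝ f 1
  have hIio : (Finset.Iio 1 : Finset ℕ) = {0} := rfl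
  rw [hIio, Finset.sum_singleton, gs_zero] at h
  rw [eq_sub_iff_add_eq]
  exact_mod_cast h.symm

lemma gs_one_norm_le (f : ℕ → EuclideanSpace ℝ (Fin p)) :
    ‖gramSchmidt ℝ f 1‖ ≤ ‖f 1‖ := by
  set E1 := gramSchmidt ℝ f 1 with hE1
  set c := (⟪f 0, f 1⟫ / ‖f 0‖^2 : ℝ) with hc
  have hdecomp : f 1 = E1 + c • f 0 := by
    rw [hE1, gs_one]; abel
  have horth : ⟪E1, c • f 0⟫ = 0 := by
    rw [real_inner_smul_right]
    have h0 : ⟪gramSchmidt ℝ f 0, gramSchmidt ℝ f 1⟫ = 0 :=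
      gramSchmidt_orthogonal ℝ f (by norm_num)
    rw [gs_zero] at h0
    rw [real_inner_comm] at h0
    rw [h0, mul_zero]
  have hsq : ‖f 1‖^2 = ‖E1‖^2 + ‖c • f 0‖^2 := by
    rw [hdecomp, norm_add_sq_real, horth]
    ring
  nlinarith [norm_nonneg (f 1), norm_nonneg E1, sq_nonneg (‖c • f 0‖)]

lemma curv_one_eq (r : ℝ → EuclideanSpace ℝ (Fin p)) (t : ℝ) :
    curv r 1 t = ‖curvGS r t 1‖ / (‖curvGS r t 0‖ * ‖curvGS r t 0‖) := rfl

lemma curvGS_zero_eq (r : ℝ → EuclideanSpace ℝ (Fin p)) (t : ℝ) :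
    curvGS r t 0 = deriv r t := by
  rw [curvGS, gs_zero, iteratedDeriv_one]

lemma curvGS_one_eq (r : ℝ → EuclideanSpace ℝ (Fin p)) (t : ℝ) :
    curvGS r t 1 = iteratedDeriv 2 r t
      - (⟪deriv r t, iteratedDeriv 2 r t⟫ / ‖deriv r t‖^2) • deriv r t := by
  rw [curvGS, gs_one]
  rw [iteratedDeriv_one]

lemma curvGS_one_norm_le (r : ℝ → EuclideanSpace ℝ (Fin p)) (t : ℝ) :
    ‖curvGS r t 1‖ ≤ ‖iteratedDeriv 2 r t‖ := gs_one_norm_le _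

lemma deriv_traj (hp : 0 < p) (lam : ℝ) (r₀ : EuclideanSpace ℝ (Fin p)) :
    deriv (traj (jordanBlock p lam) r₀) = cve p lam (Lop lam (pad p r₀)) := by
  rw [traj_eq]
  exact deriv_cve hp lam (pad_vanish r₀)

lemma iteratedDeriv_two_traj (hp : 0 < p) (lam : ℝ) (r₀ : EuclideanSpace ℝ (Fin p)) :
    iteratedDeriv 2 (traj (jordanBlock p lam) r₀)
      = cve p lam (Lop lam (Lop lam (pad p r₀))) := by
  rw [show (2:ℕ) = 1 + 1 from rfl, iteratedDeriv_succ, iteratedDeriv_one, deriv_traj hp,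
    deriv_cve hp lam (Lop_vanish lam (pad_vanish r₀))]

lemma curv_formula (hp : 0 < p) (lam : ℝ) (r₀ : EuclideanSpace ℝ (Fin p)) (t : ℝ) :
    curv (traj (jordanBlock p lam) r₀) 1 t
      = ‖cve p lam (Lop lam (Lop lam (pad p r₀))) t
          - (⟪cve p lam (Lop lam (pad p r₀)) t, cve p lam (Lop lam (Lop lam (pad p r₀))) t⟫
              / ‖cve p lam (Lop lam (pad p r₀)) t‖^2) • cve p lam (Lop lam (pad p r₀)) t‖
        / (‖cve p lam (Lop lam (pad p r₀)) t‖ * ‖cve p lam (Lop lam (pad p r₀)) t‖) := by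
  rw [curv_one_eq, curvGS_one_eq, curvGS_zero_eq, deriv_traj hp, iteratedDeriv_two_traj hp]

lemma curvGS_norm_le_w (hp : 0 < p) (lam : ℝ) (r₀ : EuclideanSpace ℝ (Fin p)) (t : ℝ) :
    ‖curvGS (traj (jordanBlock p lam) r₀) t 1‖
      ≤ ‖cve p lam (Lop lam (Lop lam (pad p r₀))) t‖ := by
  rw [← iteratedDeriv_two_traj hp]
  exact curvGS_one_norm_le _ _


lemma b1_top {lam : ℝ} {r₀ : EuclideanSpace ℝ (Fin p)} (hp : 2 ≤ p) :
    Lop lam (pad p r₀) (p-1) = lam * pad p r₀ (p-1) := by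
  rw [Lop, show p - 1 + 1 = p by omega, pad_vanish r₀ p le_rfl, add_zero]

lemma tendsto_curv_of_neg (hp : 2 ≤ p) {lam : ℝ} (hlam : lam < 0)
    {r₀ : EuclideanSpace ℝ (Fin p)} (hc : pad p r₀ (p-1) ≠ 0) :
    Filter.Tendsto (curv (traj (jordanBlock p lam) r₀) 1) Filter.atTop Filter.atTop := by
  have hp0 : 0 < p := by omega
  set b := pad p r₀ with hbdef
  set b1 := Lop lam b with hb1def
  set b2 := Lop lam b1 with hb2def
  have hb : ∀ j, p ≤ j → b j = 0 := pad_vanish r₀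
  have hb1 : ∀ j, p ≤ j → b1 j = 0 := Lop_vanish lam hb
  have hb2 : ∀ j, p ≤ j → b2 j = 0 := Lop_vanish lam hb1
  set d := p - 1 with hddef
  set e := p - 2 with hedef
  set c := b d with hcdef
  have hlam0 : lam ≠ 0 := hlam.ne
  have hb1d : b1 d = lam * c := b1_top hp
  have hb1vanish : ∀ j, d + 1 ≤ j → b1 j = 0 := fun j hj => hb1 j (by omega)
  have hb2vanish : ∀ j, d + 1 ≤ j → b2 j = 0 := fun j hj => hb2 j (by omega)
  have hb2d : b2 d = lam * (lam * c) := by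
    rw [hb2def, Lop, hb1d, hb1vanish (d+1) (by omega), add_zero]
  have hb2e : b2 e = lam * b1 e + lam * c := by
    rw [hb2def, Lop, show e + 1 = d by omega, hb1d]
  have hdlt : d < p := by omega
  have helt : e + 1 < p := by omega
  -- Pol values
  have hPb1d : ∀ t, Pol p b1 d t = lam * c := fun t => by
    rw [Pol_top hb1vanish hdlt, hb1d]
  have hPb2d : ∀ t, Pol p b2 d t = lam * (lam * c) := fun t => by
    rw [Pol_top hb2vanish hdlt, hb2d]
  have hPb1e : ∀ t, Pol p b1 e t = b1 e + t * (lam * c) := fun t => by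
    rw [Pol_top2 (fun j hj => hb1vanish j (by omega)) helt, show e + 1 = d by omega, hb1d]
  have hPb2e : ∀ t, Pol p b2 e t = b2 e + t * (lam * (lam * c)) := fun t => by
    rw [Pol_top2 (fun j hj => hb2vanish j (by omega)) helt, show e + 1 = d by omega, hb2d]
  have hΔ : ∀ t, Pol p b1 e t * Pol p b2 d t - Pol p b1 d t * Pol p b2 e t
      = -(lam^2 * c^2) := by
    intro t
    rw [hPb1e, hPb2d, hPb1d, hPb2e, hb2e]
    ring
  -- coordinates
  set ie : Fin p := ⟨e, by omega⟩ with hie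
  set id' : Fin p := ⟨d, by omega⟩ with hid
  have hij : ie ≠ id' := by
    intro hcon
    have := congrArg Fin.val hcon
    simp only [hie, hid] at this
    omega
  set M1 := ∑ j ∈ Finset.range p, |b1 j| with hM1def
  have hM1pos : 0 < M1 := by
    have h1 : 0 < |b1 d| := abs_pos.2 (by rw [hb1d]; exact mul_ne_zero hlam0 hc)
    exact lt_of_lt_of_le h1 (Finset.single_le_sum (f := fun j => |b1 j|)
      (fun j _ => abs_nonneg _) (Finset.mem_range.2 hdlt))
  set K := lam^2 * c^2 / ((Real.sqrt p)^3 * ((p : ℝ) * M1)^3) with hKdef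
  have hsqrtp : (0:ℝ) < Real.sqrt p := Real.sqrt_pos.2 (by exact_mod_cast hp0)
  have hKpos : 0 < K := by
    apply div_pos
    · have h1 : lam^2 > 0 := by positivity
      have h2 : c^2 > 0 := by positivity
      positivity
    · have : (0:ℝ) < (p:ℝ) * M1 := by positivity
      positivity
  -- main pointwise bound
  have hbound : ∀ t : ℝ, 0 ≤ t →
      K * Real.exp (-(lam * t)) / (1+t)^(3*(p-1)) ≤ curv (traj (jordanBlock p lam) r₀) 1 t := by
    intro t ht
    have h1t : (0:ℝ) < 1 + t := by linarith
    set E := Real.exp (lam * t) with hEdef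
    have hE : 0 < E := Real.exp_pos _
    set u := cve p lam b1 t with hudef
    set w := cve p lam b2 t with hwdef
    set ct := (⟪u, w⟫ / ‖u‖^2 : ℝ) with hctdef
    have hκ : curv (traj (jordanBlock p lam) r₀) 1 t = ‖w - ct • u‖ / (‖u‖ * ‖u‖) :=
      curv_formula hp0 lam r₀ t
    have hui : u ie = E * (b1 e + t * (lam * c)) := by rw [hudef, cve_apply, hPb1e]
    have hud : u id' = E * (lam * c) := by rw [hudef, cve_apply, hPb1d]
    have hwi : w ie = E * (b2 e + t * (lam * (lam * c))) := by rw [hwdef, cve_apply, hPb2e]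
    have hwd : w id' = E * (lam * (lam * c)) := by rw [hwdef, cve_apply, hPb2d]
    have hcross : E^2 * (lam^2 * c^2) ≤ ‖w - ct • u‖ * ‖u‖ := by
      have h := cross_lower u w ct hij
      have heq : u ie * w id' - u id' * w ie = E^2 * (-(lam^2*c^2)) := by
        rw [hui, hud, hwi, hwd, hb2e]
        ring
      rw [heq] at h
      calc E^2 * (lam^2 * c^2) = |E^2 * (-(lam^2*c^2))| := by
            rw [abs_mul, abs_neg, abs_of_nonneg (by positivity : (0:ℝ) ≤ E^2),
              abs_of_nonneg (by positivity : (0:ℝ) ≤ lam^2*c^2)]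
        _ ≤ _ := h
    have hU0 : 0 < ‖u‖ := by
      have h1 : |u id'| ≤ ‖u‖ := abs_coord_le u id'
      have h2 : 0 < |u id'| := by
        rw [hud]
        exact abs_pos.2 (mul_ne_zero hE.ne' (mul_ne_zero hlam0 hc))
      linarith
    have hUB : ‖u‖ ≤ Real.sqrt p * (E * ((p : ℝ) * M1 * (1+t)^(p-1))) :=
      cve_norm_le lam hp0 hb1 ht
    set B := Real.sqrt p * (E * ((p : ℝ) * M1 * (1+t)^(p-1))) with hBdef
    have hB0 : 0 < B := by positivity
    rw [hκ]
    have step1 : E^2 * (lam^2*c^2) / (‖u‖ * ‖u‖ * ‖u‖) ≤ ‖w - ct • u‖ / (‖u‖ * ‖u‖) := by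
      rw [div_le_div_iff₀ (by positivity) (by positivity)]
      calc E^2 * (lam^2*c^2) * (‖u‖ * ‖u‖)
          ≤ (‖w - ct • u‖ * ‖u‖) * (‖u‖ * ‖u‖) := by
            apply mul_le_mul_of_nonneg_right hcross (by positivity)
        _ = ‖w - ct • u‖ * (‖u‖ * ‖u‖ * ‖u‖) := by ring
    have step2 : E^2 * (lam^2*c^2) / (B * B * B) ≤ E^2 * (lam^2*c^2) / (‖u‖ * ‖u‖ * ‖u‖) := by
      apply div_le_div_of_nonneg_left (by positivity) (by positivity)
      exact mul_le_mul (mul_le_mul hUB hUB hU0.le hB0.le) hUB hU0.le (by positivity)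
    have step3 : K * Real.exp (-(lam * t)) / (1+t)^(3*(p-1)) = E^2 * (lam^2*c^2) / (B * B * B) := by
      rw [Real.exp_neg, ← hEdef, hKdef, hBdef]
      rw [show (3*(p-1)) = (p-1)*3 by ring, pow_mul]
      have hpow : ((1:ℝ)+t)^(p-1) ≠ 0 := pow_ne_zero _ h1t.ne'
      have hpM1 : ((p:ℝ) * M1) ≠ 0 := by positivity
      field_simp
    linarith
  -- conclusion
  have hφ : Filter.Tendsto (fun t : ℝ => K * Real.exp (-(lam * t)) / (1+t)^(3*(p-1)))
      Filter.atTop Filter.atTop := by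
    have h1 := (tendsto_exp_poly (3*(p-1)) (bb := -lam) (by linarith)).const_mul_atTop hKpos
    apply h1.congr
    intro t
    rw [neg_mul, mul_div_assoc]
  apply Filter.tendsto_atTop_mono' _ _ hφ
  filter_upwards [Filter.eventually_ge_atTop (0:ℝ)] with t ht
  exact hbound t ht


lemma curv_le_w_div (hp0 : 0 < p) (lam : ℝ) (r₀ : EuclideanSpace ℝ (Fin p)) (t : ℝ) :
    curv (traj (jordanBlock p lam) r₀) 1 t
      ≤ ‖cve p lam (Lop lam (Lop lam (pad p r₀))) t‖
        / (‖cve p lam (Lop lam (pad p r₀)) t‖ * ‖cve p lam (Lop lam (pad p r₀)) t‖) := by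
  rw [curv_one_eq, curvGS_zero_eq, deriv_traj hp0]
  rcases eq_or_lt_of_le (mul_nonneg (norm_nonneg (cve p lam (Lop lam (pad p r₀)) t))
      (norm_nonneg (cve p lam (Lop lam (pad p r₀)) t))) with h | h
  · rw [← h, div_zero, div_zero]
  · exact (div_le_div_iff_of_pos_right h).2 (curvGS_norm_le_w hp0 lam r₀ t)

lemma curv_ev_lt_one (hp : 2 ≤ p) {lam : ℝ} (hlam : 0 ≤ lam)
    {r₀ : EuclideanSpace ℝ (Fin p)} (hc : pad p r₀ (p-1) ≠ 0) :
    ∀ᶠ t in Filter.atTop, curv (traj (jordanBlock p lam) r₀) 1 t < 1 := by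
  have hp0 : 0 < p := by omega
  have hb : ∀ j, p ≤ j → pad p r₀ j = 0 := pad_vanish r₀
  have hb1 : ∀ j, p ≤ j → Lop lam (pad p r₀) j = 0 := Lop_vanish lam hb
  have hb2 : ∀ j, p ≤ j → Lop lam (Lop lam (pad p r₀)) j = 0 := Lop_vanish lam hb1
  rcases lt_or_eq_of_le hlam with hpos | hzero
  · -- lam > 0
    set b1 := Lop lam (pad p r₀) with hb1def
    set b2 := Lop lam (Lop lam (pad p r₀)) with hb2def
    set c := pad p r₀ (p-1) with hcdef
    have hb1d : b1 (p-1) = lam * c := b1_top hp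
    set M2 := ∑ j ∈ Finset.range p, |b2 j| with hM2def
    have hM2 : 0 ≤ M2 := Finset.sum_nonneg fun _ _ => abs_nonneg _
    set Kq := Real.sqrt p * ((p : ℝ) * M2) / (lam^2 * c^2) with hKqdef
    have hub : ∀ t : ℝ, 0 ≤ t → curv (traj (jordanBlock p lam) r₀) 1 t
        ≤ Kq * ((1+t)^(p-1) * Real.exp (-(lam * t))) := by
      intro t ht
      have h1t : (0:ℝ) < 1 + t := by linarith
      set E := Real.exp (lam * t) with hEdef
      have hE : 0 < E := Real.exp_pos _
      set u := cve p lam b1 t with hudef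
      set w := cve p lam b2 t with hwdef
      set id' : Fin p := ⟨p-1, by omega⟩ with hid
      have hud : u id' = E * (lam * c) := by
        rw [hudef, cve_apply, show ((id' : Fin p) : ℕ) = p - 1 from rfl,
          Pol_top (fun j hj => hb1 j (by omega)) (by omega : p - 1 < p), hb1d]
      have hU1 : E * |lam * c| ≤ ‖u‖ := by
        have h1 : |u id'| ≤ ‖u‖ := abs_coord_le u id'
        rw [hud, abs_mul, abs_of_nonneg hE.le] at h1
        exact h1
      have hU0 : 0 < ‖u‖ := by
        have : 0 < E * |lam * c| := by
          apply mul_pos hE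
          exact abs_pos.2 (mul_ne_zero hpos.ne' hc)
        linarith
      have hwB : ‖w‖ ≤ Real.sqrt p * (E * ((p : ℝ) * M2 * (1+t)^(p-1))) :=
        cve_norm_le lam hp0 hb2 ht
      calc curv (traj (jordanBlock p lam) r₀) 1 t ≤ ‖w‖ / (‖u‖ * ‖u‖) :=
            curv_le_w_div hp0 lam r₀ t
        _ ≤ ‖w‖ / ((E * |lam * c|) * (E * |lam * c|)) := by
            apply div_le_div_of_nonneg_left (norm_nonneg _) (by positivity)
            exact mul_le_mul hU1 hU1 (by positivity) (norm_nonneg _)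
        _ ≤ (Real.sqrt p * (E * ((p : ℝ) * M2 * (1+t)^(p-1)))) / ((E * |lam * c|) * (E * |lam * c|)) := by
            apply div_le_div_of_nonneg_right hwB (by positivity)
        _ = Kq * ((1+t)^(p-1) * Real.exp (-(lam * t))) := by
            rw [Real.exp_neg, ← hEdef, hKqdef]
            have h9 : E * |lam * c| * (E * |lam * c|) = E^2 * ((lam * c) * (lam * c)) := by
              rw [show E * |lam * c| * (E * |lam * c|) = E^2 * (|lam * c| * |lam * c|) by ring,
                abs_mul_abs_self]
            rw [h9]
            have hlc : lam * c ≠ 0 := mul_ne_zero hpos.ne' hc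
            field_simp
    have hψ : Filter.Tendsto (fun t : ℝ => Kq * ((1+t)^(p-1) * Real.exp (-(lam * t))))
        Filter.atTop (nhds 0) := by
      have := (tendsto_poly_exp (p-1) hpos).const_mul Kq
      rwa [mul_zero] at this
    filter_upwards [hψ.eventually_lt_const (by norm_num : (0:ℝ) < 1),
      Filter.eventually_ge_atTop (0:ℝ)] with t h1 h2
    exact lt_of_le_of_lt (hub t h2) h1
  · -- lam = 0
    subst hzero
    by_cases hp2 : p = 2
    · -- p = 2 : second derivative vanishes identically
      have hb2z : ∀ j, Lop 0 (Lop 0 (pad p r₀)) j = 0 := by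
        intro j
        have h1 : pad p r₀ (j+1+1) = 0 := hb _ (by omega)
        simp [Lop, h1]
      have hw0 : ∀ t, cve p 0 (Lop 0 (Lop 0 (pad p r₀))) t = 0 := by
        intro t
        apply (WithLp.equiv 2 (Fin p → ℝ)).injective
        funext i
        simp [cve, Pol, hb2z]
      filter_upwards with t
      rw [curv_formula hp0 0 r₀ t, hw0 t]
      simp
    · -- p ≥ 3
      obtain ⟨m, rfl⟩ : ∃ m, p = m + 3 := ⟨p - 3, by omega⟩
      have hc2 : pad (m+3) r₀ (m+2) ≠ 0 := hc
      set b := pad (m+3) r₀ with hbdef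
      have hb1e : ∀ j, Lop 0 b j = b (j+1) := by intro j; simp [Lop]
      set b1 := Lop 0 b with hb1def
      set b2 := Lop 0 b1 with hb2def
      set c2 := b (m+2) with hc2def
      have hfac : (0:ℝ) < (Nat.factorial (m+1) : ℝ) := by
        exact_mod_cast Nat.factorial_pos (m+1)
      -- decomposition of the relevant coordinate polynomial
      have hdec : ∀ t : ℝ, Pol (m+3) b1 0 t
          = Pol (m+1) b1 0 t + t^(m+1) / (Nat.factorial (m+1)) * c2 := by
        intro t
        rw [Pol, Finset.sum_range_succ, Finset.sum_range_succ]
        have h1 : b1 (0 + (m+2)) = 0 := by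
          rw [hb1e]
          exact hb _ (by omega)
        have h2 : b1 (0 + (m+1)) = c2 := by
          rw [hb1e, hc2def]
          congr 1
          omega
        rw [h1, h2, mul_zero, add_zero, Pol]
      -- cutoff for the lower-order part
      set b1' : ℕ → ℝ := fun j => if j < m+1 then b1 j else 0 with hb1'def
      have hcut : ∀ t : ℝ, Pol (m+1) b1 0 t = Pol (m+1) b1' 0 t := by
        intro t
        apply Finset.sum_congr rfl
        intro k hk
        rw [hb1'def]
        simp only [zero_add]
        rw [if_pos (Finset.mem_range.1 hk)]
      have hb1'v : ∀ j, m+1 ≤ j → b1' j = 0 := by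
        intro j hj
        rw [hb1'def]
        simp only
        rw [if_neg (by omega)]
      set A := ((m+1 : ℕ) : ℝ) * ∑ j ∈ Finset.range (m+1), |b1' j| with hAdef
      have hA0 : 0 ≤ A := by
        rw [hAdef]
        have : (0:ℝ) ≤ ∑ j ∈ Finset.range (m+1), |b1' j| :=
          Finset.sum_nonneg fun _ _ => abs_nonneg _
        positivity
      have hsmall : ∀ t : ℝ, 0 ≤ t → |Pol (m+1) b1 0 t| ≤ A * (1+t)^m := by
        intro t ht
        rw [hcut]
        exact Pol_abs_le (p := m+1) (q := m+1) (b := b1') (by omega) hb1'v 0 ht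
      -- lower bound for the first coordinate of the velocity
      set κ₂ := |c2| / (2 * (Nat.factorial (m+1))) with hκ₂def
      have hκ₂pos : 0 < κ₂ := by
        rw [hκ₂def]
        apply div_pos (abs_pos.2 hc2)
        positivity
      set T₂ := 2 * A * 2^m * (Nat.factorial (m+1)) / |c2| with hT₂def
      have hlow : ∀ t : ℝ, 1 ≤ t → T₂ ≤ t → κ₂ * t^(m+1) ≤ |Pol (m+3) b1 0 t| := by
        intro t ht1 htT
        have ht0 : (0:ℝ) < t := by linarith
        have h1 : |Pol (m+3) b1 0 t|
            ≥ t^(m+1) * |c2| / (Nat.factorial (m+1)) - A * (1+t)^m := by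
          rw [hdec]
          have h2 := abs_sub_abs_le_abs_sub (t^(m+1) / (Nat.factorial (m+1)) * c2)
            (-(Pol (m+1) b1 0 t))
          rw [abs_neg, sub_neg_eq_add] at h2
          have h3 : |t^(m+1) / (Nat.factorial (m+1)) * c2|
              = t^(m+1) * |c2| / (Nat.factorial (m+1)) := by
            rw [abs_mul, abs_div, abs_of_nonneg (by positivity : (0:ℝ) ≤ t^(m+1)),
              abs_of_nonneg hfac.le]
            ring
          have h4 := hsmall t ht0.le
          have h5 : |t ^ (m + 1) / ↑(Nat.factorial (m + 1)) * c2 + Pol (m + 1) b1 0 t|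
              = |Pol (m + 1) b1 0 t + t ^ (m + 1) / ↑(Nat.factorial (m + 1)) * c2| := by
            rw [add_comm]
          rw [h3, h5] at h2
          linarith
        have h6 : A * (1+t)^m ≤ A * 2^m * t^m := by
          have : (1+t)^m ≤ (2*t)^m := by
            apply pow_le_pow_left₀ (by linarith) (by linarith)
          calc A * (1+t)^m ≤ A * (2*t)^m := mul_le_mul_of_nonneg_left this hA0
            _ = A * 2^m * t^m := by rw [mul_pow]; ring
        have h7 : A * 2^m * t^m ≤ |c2| / (2 * (Nat.factorial (m+1))) * t^(m+1) := by
          have habs : (0:ℝ) < |c2| := abs_pos.2 hc2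
          have hTle : 2 * A * 2^m * (Nat.factorial (m+1)) ≤ t * |c2| := by
            rw [hT₂def] at htT
            calc 2 * A * 2^m * (Nat.factorial (m+1))
                = (2 * A * 2^m * (Nat.factorial (m+1)) / |c2|) * |c2| := by
                  field_simp
              _ ≤ t * |c2| := by
                  apply mul_le_mul_of_nonneg_right htT habs.le
          calc A * 2^m * t^m = (2 * A * 2^m * (Nat.factorial (m+1)))
                * t^m / (2 * (Nat.factorial (m+1))) := by
                field_simp
            _ ≤ (t * |c2|) * t^m / (2 * (Nat.factorial (m+1))) := by
                apply div_le_div_of_nonneg_right _ (by positivity)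
                apply mul_le_mul_of_nonneg_right hTle (by positivity)
            _ = |c2| / (2 * (Nat.factorial (m+1))) * t^(m+1) := by
                rw [pow_succ]
                ring
        have h8 : t^(m+1) * |c2| / (Nat.factorial (m+1))
            - |c2| / (2 * (Nat.factorial (m+1))) * t^(m+1)
            = κ₂ * t^(m+1) := by
          rw [hκ₂def]
          field_simp
          ring
        linarith
      -- upper bound for the acceleration
      have hb2v : ∀ j, m+1 ≤ j → b2 j = 0 := by
        intro j hj
        rw [hb2def]
        simp only [Lop, zero_mul, zero_add]
        rw [hb1e]
        exact hb _ (by omega)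
      set M2' := ∑ j ∈ Finset.range (m+1), |b2 j| with hM2'def
      have hM2' : 0 ≤ M2' := Finset.sum_nonneg fun _ _ => abs_nonneg _
      set Cw := Real.sqrt (m+3) * (((m+3 : ℕ) : ℝ) * M2') * 2^m with hCwdef
      have hCw0 : 0 ≤ Cw := by
        rw [hCwdef]
        have := Real.sqrt_nonneg ((m:ℝ)+3)
        positivity
      have hwB : ∀ t : ℝ, 1 ≤ t → ‖cve (m+3) 0 b2 t‖ ≤ Cw * t^m := by
        intro t ht1
        have ht0 : (0:ℝ) ≤ t := by linarith
        have h1 := cve_norm_le (p := m+3) 0 (q := m+1) (by omega) hb2v (t := t) ht0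
        simp only [zero_mul, Real.exp_zero, one_mul] at h1
        have h2 : ((m+3 : ℕ) : ℝ) * M2' * (1+t)^((m+1)-1) ≤ ((m+3 : ℕ) : ℝ) * M2' * (2^m * t^m) := by
          apply mul_le_mul_of_nonneg_left _ (by positivity)
          have h3 : ((1:ℝ)+t)^m ≤ (2*t)^m := pow_le_pow_left₀ (by linarith) (by linarith) m
          rw [show (m+1)-1 = m from rfl]
          calc ((1:ℝ)+t)^m ≤ (2*t)^m := h3
            _ = 2^m * t^m := mul_pow 2 t m
        calc ‖cve (m+3) 0 b2 t‖ ≤ Real.sqrt (m+3) * (((m+3 : ℕ):ℝ) * M2' * (1+t)^((m+1)-1)) := by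
              convert h1 using 3
              push_cast
              ring
          _ ≤ Real.sqrt (m+3) * (((m+3 : ℕ):ℝ) * M2' * (2^m * t^m)) := by
              apply mul_le_mul_of_nonneg_left h2 (Real.sqrt_nonneg _)
          _ = Cw * t^m := by rw [hCwdef]; ring
      -- conclude
      filter_upwards [Filter.eventually_ge_atTop (1:ℝ), Filter.eventually_ge_atTop T₂,
        Filter.eventually_gt_atTop (Cw / (κ₂ * κ₂))] with t ht1 htT htC
      have ht0 : (0:ℝ) < t := by linarith
      set u := cve (m+3) 0 b1 t with hudef
      set i0 : Fin (m+3) := ⟨0, by omega⟩ with hi0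
      have hu0 : |u i0| = |Pol (m+3) b1 0 t| := by
        rw [hudef, cve_apply]
        simp [hi0]
      have hU1 : κ₂ * t^(m+1) ≤ ‖u‖ := by
        have h1 := abs_coord_le u i0
        have h2 := hlow t ht1 htT
        rw [hu0] at h1
        linarith
      have hU0 : 0 < ‖u‖ := lt_of_lt_of_le (by positivity) hU1
      have hκle := curv_le_w_div (p := m+3) (by omega) 0 r₀ t
      have hwt := hwB t ht1
      calc curv (traj (jordanBlock (m+3) 0) r₀) 1 t
          ≤ ‖cve (m+3) 0 b2 t‖ / (‖u‖ * ‖u‖) := hκle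
        _ ≤ (Cw * t^m) / ((κ₂ * t^(m+1)) * (κ₂ * t^(m+1))) := by
            apply div_le_div₀ (by positivity) hwt (by positivity)
            exact mul_le_mul hU1 hU1 (by positivity) (norm_nonneg _)
        _ = (Cw / (κ₂ * κ₂)) / t^(m+2) := by
            have hpowe : (t:ℝ)^(m+1) * t^(m+1) = t^m * t^(m+2) := by
              rw [← pow_add, ← pow_add]
              congr 1
              omega
            rw [div_eq_div_iff (by positivity) (by positivity)]
            have h2 : Cw / (κ₂*κ₂) * (κ₂*t^(m+1)*(κ₂*t^(m+1))) = Cw * (t^(m+1)*t^(m+1)) := by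
              field_simp
            rw [h2, hpowe]
            ring
        _ ≤ (Cw / (κ₂ * κ₂)) / t := by
            apply div_le_div_of_nonneg_left (by positivity) ht0
            calc t = t^1 := (pow_one t).symm
              _ ≤ t^(m+2) := pow_le_pow_right₀ ht1 (by omega)
        _ < 1 := by
            rw [div_lt_one ht0]
            exact htC


lemma traj_norm_le (hp0 : 0 < p) (lam : ℝ) (r₀ : EuclideanSpace ℝ (Fin p)) {t : ℝ} (ht : 0 ≤ t) :
    ‖traj (jordanBlock p lam) r₀ t‖
      ≤ (Real.sqrt p * ((p:ℝ) * p) * ((1+t)^(p-1) * Real.exp (lam * t))) * ‖r₀‖ := by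
  have h1 : ‖traj (jordanBlock p lam) r₀ t‖
      ≤ Real.sqrt p * (Real.exp (lam * t)
        * ((p : ℝ) * (∑ j ∈ Finset.range p, |pad p r₀ j|) * (1+t)^(p-1))) := by
    rw [traj_eq]
    exact cve_norm_le lam hp0 (pad_vanish r₀) ht
  have h2 : ∑ j ∈ Finset.range p, |pad p r₀ j| ≤ (p : ℝ) * ‖r₀‖ := by
    calc ∑ j ∈ Finset.range p, |pad p r₀ j| ≤ ∑ _j ∈ Finset.range p, ‖r₀‖ := by
          apply Finset.sum_le_sum
          intro j hj
          have hjp : j < p := Finset.mem_range.1 hj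
          rw [pad]
          rw [dif_pos hjp]
          exact abs_coord_le r₀ ⟨j, hjp⟩
      _ = (p : ℝ) * ‖r₀‖ := by rw [Finset.sum_const, Finset.card_range, nsmul_eq_mul]
  have h1t : (0:ℝ) ≤ 1 + t := by linarith
  calc ‖traj (jordanBlock p lam) r₀ t‖
      ≤ Real.sqrt p * (Real.exp (lam * t)
        * ((p : ℝ) * (∑ j ∈ Finset.range p, |pad p r₀ j|) * (1+t)^(p-1))) := h1
    _ ≤ Real.sqrt p * (Real.exp (lam * t) * ((p : ℝ) * ((p:ℝ) * ‖r₀‖) * (1+t)^(p-1))) := by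
        apply mul_le_mul_of_nonneg_left _ (Real.sqrt_nonneg _)
        apply mul_le_mul_of_nonneg_left _ (Real.exp_nonneg _)
        apply mul_le_mul_of_nonneg_right _ (by positivity)
        apply mul_le_mul_of_nonneg_left h2 (Nat.cast_nonneg p)
    _ = (Real.sqrt p * ((p:ℝ) * p) * ((1+t)^(p-1) * Real.exp (lam * t))) * ‖r₀‖ := by ring

lemma stable_of_neg (hp0 : 0 < p) {lam : ℝ} (hlam : lam < 0) :
    IsAsympStableZero (jordanBlock p lam) := by
  set g : ℝ → ℝ := fun t => Real.sqrt p * ((p:ℝ) * p) * ((1+t)^(p-1) * Real.exp (lam * t))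
    with hgdef
  have hg0 : Filter.Tendsto g Filter.atTop (nhds 0) := by
    have h := (tendsto_poly_exp (p-1) (show 0 < -lam by linarith)).const_mul
      (Real.sqrt p * ((p:ℝ) * p))
    rw [mul_zero] at h
    apply h.congr
    intro t
    rw [hgdef]
    simp only [neg_mul, neg_neg]
  have hgcont : Continuous g := by
    apply Continuous.mul continuous_const
    apply Continuous.mul
    · exact (continuous_const.add continuous_id).pow _
    · exact Real.continuous_exp.comp (continuous_const.mul continuous_id)
  obtain ⟨T, hT⟩ : ∃ T : ℝ, ∀ t ≥ T, g t ≤ 1 := by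
    have := hg0.eventually_lt_const (by norm_num : (0:ℝ) < 1)
    obtain ⟨T, hT⟩ := Filter.eventually_atTop.1 this
    exact ⟨T, fun t ht => (hT t ht).le⟩
  obtain ⟨C₀, hC₀⟩ := (isCompact_Icc (a := (0:ℝ)) (b := T)).exists_bound_of_continuousOn
    hgcont.continuousOn
  set Cg := max C₀ 1 with hCgdef
  have hCg0 : 0 < Cg := lt_of_lt_of_le one_pos (le_max_right _ _)
  have hCg : ∀ t : ℝ, 0 ≤ t → g t ≤ Cg := by
    intro t ht
    by_cases htT : t ≤ T
    · have := hC₀ t ⟨ht, htT⟩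
      rw [Real.norm_eq_abs] at this
      calc g t ≤ |g t| := le_abs_self _
        _ ≤ C₀ := this
        _ ≤ Cg := le_max_left _ _
    · calc g t ≤ 1 := hT t (by linarith)
        _ ≤ Cg := le_max_right _ _
  constructor
  · intro ε hε
    refine ⟨ε / Cg, by positivity, ?_⟩
    intro r₀ hr t ht
    calc ‖traj (jordanBlock p lam) r₀ t‖ ≤ g t * ‖r₀‖ := traj_norm_le hp0 lam r₀ ht
      _ ≤ Cg * ‖r₀‖ := mul_le_mul_of_nonneg_right (hCg t ht) (norm_nonneg _)
      _ < Cg * (ε / Cg) := by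
          apply mul_lt_mul_of_pos_left hr hCg0
      _ = ε := by field_simp
  · refine ⟨1, one_pos, ?_⟩
    intro r₀ _
    apply squeeze_zero_norm' (a := fun t => g t * ‖r₀‖)
    · filter_upwards [Filter.eventually_ge_atTop (0:ℝ)] with t ht
      exact traj_norm_le hp0 lam r₀ ht
    · have := hg0.mul_const ‖r₀‖
      rwa [zero_mul] at this

lemma not_stable_of_nonneg (hp0 : 0 < p) {lam : ℝ} (hlam : 0 ≤ lam) :
    ¬ IsAsympStableZero (jordanBlock p lam) := by
  rintro ⟨_, δ, hδ, hattr⟩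
  set id' : Fin p := ⟨p-1, by omega⟩ with hid
  set r₀ := EuclideanSpace.single id' (δ/2) with hr₀def
  have hnorm : ‖r₀‖ < δ := by
    rw [hr₀def, EuclideanSpace.norm_single]
    rw [Real.norm_eq_abs, abs_of_pos (by linarith)]
    linarith
  have htend := hattr r₀ hnorm
  have hcoord : Filter.Tendsto (fun t => traj (jordanBlock p lam) r₀ t id')
      Filter.atTop (nhds 0) := by
    have hcont : Continuous (fun x : EuclideanSpace ℝ (Fin p) => x id') :=
      (continuous_apply id').comp (PiLp.continuousLinearEquiv 2 ℝ
        (fun _ : Fin p => ℝ)).continuous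
    have := (hcont.tendsto 0).comp htend
    simpa [Function.comp_def] using this
  have hval : ∀ t : ℝ, traj (jordanBlock p lam) r₀ t id' = Real.exp (lam * t) * (δ/2) := by
    intro t
    rw [traj_eq, cve_apply]
    congr 1
    have hvanish : ∀ j, (p-1) + 1 ≤ j → pad p r₀ j = 0 := fun j hj =>
      pad_vanish r₀ j (by omega)
    rw [show ((id' : Fin p) : ℕ) = p - 1 from rfl, Pol_top hvanish (by omega)]
    rw [pad]
    rw [dif_pos (by omega : p - 1 < p)]
    rw [hr₀def]
    have : (⟨p-1, by omega⟩ : Fin p) = id' := rfl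
    rw [this, EuclideanSpace.single_apply, if_pos rfl]
  have hev : ∀ᶠ t in Filter.atTop, |traj (jordanBlock p lam) r₀ t id'| < δ/2 := by
    have h := Metric.tendsto_nhds.1 hcoord (δ/2) (by linarith)
    simpa [Real.dist_eq] using h
  obtain ⟨T, hT⟩ := Filter.eventually_atTop.1 (hev.and (Filter.eventually_ge_atTop (0:ℝ)))
  obtain ⟨habs, ht0⟩ := hT (max T 0) (le_max_left _ _)
  rw [hval] at habs
  have h1 : (1:ℝ) ≤ Real.exp (lam * max T 0) := by
    rw [show (1:ℝ) = Real.exp 0 from (Real.exp_zero).symm]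
    apply Real.exp_le_exp.2
    have := le_max_right T 0
    positivity
  have h2 : Real.exp (lam * max T 0) * (δ/2) ≥ δ/2 := by
    nlinarith
  rw [abs_of_pos (by nlinarith)] at habs
  linarith


end
end JP

open Filter in
/-- For a Jordan block (`p ≥ 2`), the zero solution of `ṙ = A r` is asymptotically stable iff
for every (equivalently, some) initial value with all coordinates nonzero the first curvature
of the trajectory tends to `+∞`. -/
theorem jordan_asymp_stable_iff_curvature (p : ℕ) (hp : 2 ≤ p) (lam : ℝ) :
    (IsAsympStableZero (jordanBlock p lam) ↔
      ∀ r₀ : EuclideanSpace ℝ (Fin p), (∀ i, r₀ i ≠ 0) →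
        Tendsto (curv (traj (jordanBlock p lam) r₀) 1) atTop atTop) ∧
    (IsAsympStableZero (jordanBlock p lam) ↔
      ∃ r₀ : EuclideanSpace ℝ (Fin p), (∀ i, r₀ i ≠ 0) ∧
        Tendsto (curv (traj (jordanBlock p lam) r₀) 1) atTop atTop) := by
  have hp0 : 0 < p := by omega
  have hpadne : ∀ (r₀ : EuclideanSpace ℝ (Fin p)), (∀ i, r₀ i ≠ 0) → JP.pad p r₀ (p-1) ≠ 0 := by
    intro r₀ h
    rw [JP.pad]
    rw [dif_pos (by omega : p-1 < p)]
    exact h _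
  have hforward : IsAsympStableZero (jordanBlock p lam) → lam < 0 := by
    intro hS
    by_contra hcon
    exact JP.not_stable_of_nonneg hp0 (not_lt.1 hcon) hS
  have hback : lam < 0 → IsAsympStableZero (jordanBlock p lam) := fun h =>
    JP.stable_of_neg hp0 h
  have hcurvall : lam < 0 → ∀ r₀ : EuclideanSpace ℝ (Fin p), (∀ i, r₀ i ≠ 0) →
      Tendsto (curv (traj (jordanBlock p lam) r₀) 1) atTop atTop :=
    fun hl r₀ h => JP.tendsto_curv_of_neg hp hl (hpadne r₀ h)
  have hcurvneg : ∀ r₀ : EuclideanSpace ℝ (Fin p), (∀ i, r₀ i ≠ 0) →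
      Tendsto (curv (traj (jordanBlock p lam) r₀) 1) atTop atTop → lam < 0 := by
    intro r₀ h htend
    by_contra hcon
    have hev := JP.curv_ev_lt_one hp (not_lt.1 hcon) (hpadne r₀ h)
    have hge := htend.eventually_ge_atTop 1
    obtain ⟨t, h1, h2⟩ := (hev.and hge).exists
    linarith
  have honesne : ∀ i, ((WithLp.equiv 2 (Fin p → ℝ)).symm (fun _ => (1:ℝ))) i ≠ 0 := by
    intro i
    rw [WithLp.equiv_symm_apply, PiLp.toLp_apply]
    norm_num
  constructor
  · constructor
    · intro hS r₀ h
      exact hcurvall (hforward hS) r₀ h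
    · intro hall
      exact hback (hcurvneg _ honesne (hall _ honesne))
  · constructor
    · intro hS
      exact ⟨_, honesne, hcurvall (hforward hS) _ honesne⟩
    · rintro ⟨r₀, h, htend⟩
      exact hback (hcurvneg r₀ h htend)
end

section
/- Let A = [[a, b], [−b, a]] with b > 0 and r₀ ≠ 0. The zero solution of ṙ = Ar is asymptotically stable iff the curvature of the trajectory tends to +∞; it is stable but not asymptotically stable iff the curvature is a positive constant; it is unstable iff the curvature tends to 0. -/
open Matrix Filter

noncomputable def phi : ℂ →+* Matrix (Fin 2) (Fin 2) ℝ where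
  toFun z := !![z.re, z.im; -z.im, z.re]
  map_one' := by ext i j; fin_cases i <;> fin_cases j <;> simp
  map_mul' z w := by
    ext i j
    fin_cases i <;> fin_cases j <;>
      simp [Matrix.mul_apply, Fin.sum_univ_two, Complex.mul_re, Complex.mul_im] <;> ring
  map_zero' := by ext i j; fin_cases i <;> fin_cases j <;> simp
  map_add' z w := by ext i j; fin_cases i <;> fin_cases j <;> simp [Complex.add_re, Complex.add_im] <;> ring

lemma phi_cont : Continuous phi := by
  apply continuous_matrix
  intro i j
  fin_cases i <;> fin_cases j <;>
    simp [phi] <;> continuity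

lemma exp_phi (z : ℂ) : NormedSpace.exp (phi z) = phi (Complex.exp z) := by
  letI : SeminormedRing (Matrix (Fin 2) (Fin 2) ℝ) := Matrix.linftyOpSemiNormedRing
  letI : NormedRing (Matrix (Fin 2) (Fin 2) ℝ) := Matrix.linftyOpNormedRing
  letI : NormedAlgebra ℝ (Matrix (Fin 2) (Fin 2) ℝ) := Matrix.linftyOpNormedAlgebra
  erw [← NormedSpace.map_exp phi phi_cont z,
    ← Complex.exp_eq_exp_ℂ]

/-- action of `phi z` on a Euclidean vector -/
noncomputable def P (z : ℂ) (v : EuclideanSpace ℝ (Fin 2)) : EuclideanSpace ℝ (Fin 2) :=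
  Matrix.toEuclideanLin (phi z) v

lemma P_apply (z : ℂ) (v : EuclideanSpace ℝ (Fin 2)) :
    P z v = WithLp.toLp 2 ![z.re * v 0 + z.im * v 1, -z.im * v 0 + z.re * v 1] := by
  ext i
  simp only [P, Matrix.toEuclideanLin_apply]
  fin_cases i <;>
    simp [phi, Matrix.mulVec, dotProduct, Fin.sum_univ_two, Matrix.vecHead, Matrix.vecTail]

lemma norm_sq_E (v : EuclideanSpace ℝ (Fin 2)) : ‖v‖ ^ 2 = v 0 ^ 2 + v 1 ^ 2 := by
  rw [← real_inner_self_eq_norm_sq, PiLp.inner_apply]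
  simp [PiLp.inner_apply, Fin.sum_univ_two, sq]

lemma inner_P (z z' : ℂ) (v : EuclideanSpace ℝ (Fin 2)) :
    inner ℝ (P z v) (P z' v) = (z.re * z'.re + z.im * z'.im) * ‖v‖ ^ 2 := by
  rw [norm_sq_E]
  simp only [PiLp.inner_apply, RCLike.inner_apply, starRingEnd_apply, P_apply,
    Fin.sum_univ_two]
  simp only [Matrix.cons_val_zero, Matrix.cons_val_one, Matrix.head_cons, star_trivial]
  ring

lemma norm_P (z : ℂ) (v : EuclideanSpace ℝ (Fin 2)) : ‖P z v‖ = ‖z‖ * ‖v‖ := by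
  have h1 : ‖P z v‖ ^ 2 = (‖z‖ * ‖v‖) ^ 2 := by
    rw [← real_inner_self_eq_norm_sq, inner_P]
    rw [mul_pow, Complex.sq_norm, Complex.normSq_apply]
  have h2 := congrArg Real.sqrt h1
  rwa [Real.sqrt_sq (norm_nonneg _), Real.sqrt_sq (by positivity)] at h2

lemma P_mul (z z' : ℂ) (v : EuclideanSpace ℝ (Fin 2)) : P (z * z') v = P z (P z' v) := by
  simp only [P_apply, Complex.mul_re, Complex.mul_im]
  ext i
  fin_cases i <;> simp <;> ring

lemma P_smul (c : ℝ) (z : ℂ) (v : EuclideanSpace ℝ (Fin 2)) :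
    P ((c : ℂ) * z) v = c • P z v := by
  simp only [P_apply, Complex.mul_re, Complex.mul_im, Complex.ofReal_re, Complex.ofReal_im]
  ext i
  fin_cases i <;> simp [PiLp.smul_apply] <;> ring

lemma P_sub (z z' : ℂ) (v : EuclideanSpace ℝ (Fin 2)) : P (z - z') v = P z v - P z' v := by
  simp only [P_apply, Complex.sub_re, Complex.sub_im]
  ext i
  fin_cases i <;> simp [PiLp.sub_apply] <;> ring

lemma matrix_eq_phi (a b : ℝ) (t : ℝ) :
    t • !![a, b; -b, a] = phi ((t : ℂ) * (a + b * Complex.I)) := by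
  ext i j
  fin_cases i <;> fin_cases j <;>
    simp [phi, Complex.mul_re, Complex.mul_im, Complex.add_re, Complex.add_im] <;> ring

lemma traj_eq_s16 (a b : ℝ) (r₀ : EuclideanSpace ℝ (Fin 2)) (t : ℝ) :
    traj !![a, b; -b, a] r₀ t = P (Complex.exp ((t : ℂ) * (a + b * Complex.I))) r₀ := by
  rw [traj, matrix_eq_phi, exp_phi, P]

lemma norm_traj (a b : ℝ) (r₀ : EuclideanSpace ℝ (Fin 2)) (t : ℝ) :
    ‖traj !![a, b; -b, a] r₀ t‖ = Real.exp (a * t) * ‖r₀‖ := by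
  rw [traj_eq_s16, norm_P, Complex.norm_exp]
  norm_num [Complex.mul_re, Complex.add_re, Complex.add_im, mul_comm]

lemma P_add (z z' : ℂ) (v : EuclideanSpace ℝ (Fin 2)) : P (z + z') v = P z v + P z' v := by
  simp only [P_apply, Complex.add_re, Complex.add_im]
  ext i
  fin_cases i <;> simp [PiLp.add_apply] <;> ring

lemma P_one (v : EuclideanSpace ℝ (Fin 2)) : P 1 v = v := by
  ext i
  simp only [P_apply]
  fin_cases i <;> simp

/-- `P · v` as a linear map in the complex argument. -/
noncomputable def PL (v : EuclideanSpace ℝ (Fin 2)) : ℂ →ₗ[ℝ] EuclideanSpace ℝ (Fin 2) where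
  toFun z := P z v
  map_add' z z' := P_add z z' v
  map_smul' c z := by simp only [RingHom.id_apply, ← P_smul, Complex.real_smul]

noncomputable def trajC (z₀ : ℂ) (v : EuclideanSpace ℝ (Fin 2)) (t : ℝ) :
    EuclideanSpace ℝ (Fin 2) :=
  P (Complex.exp ((t : ℂ) * z₀)) v

lemma hasDerivAt_trajC (z₀ : ℂ) (v : EuclideanSpace ℝ (Fin 2)) (t : ℝ) :
    HasDerivAt (trajC z₀ v) (trajC z₀ (P z₀ v) t) t := by
  have hexp : HasDerivAt (fun s : ℝ => Complex.exp ((s : ℂ) * z₀))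
      (Complex.exp ((t : ℂ) * z₀) * z₀) t := by
    have h1 : HasDerivAt (fun w : ℂ => Complex.exp (w * z₀))
        (Complex.exp ((t : ℂ) * z₀) * (1 * z₀)) (t : ℂ) :=
      ((hasDerivAt_id ((t : ℂ))).mul_const z₀).cexp
    simpa using h1.comp_ofReal
  have hL := ((PL v).toContinuousLinearMap).hasFDerivAt (x := Complex.exp ((t : ℂ) * z₀))
  have := hL.comp_hasDerivAt t hexp
  have h2 : (PL v).toContinuousLinearMap (Complex.exp ((t : ℂ) * z₀) * z₀)
      = trajC z₀ (P z₀ v) t := by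
    show P _ v = _
    rw [trajC, ← P_mul]
  rw [h2] at this
  exact this

lemma deriv_trajC (z₀ : ℂ) (v : EuclideanSpace ℝ (Fin 2)) :
    deriv (trajC z₀ v) = trajC z₀ (P z₀ v) :=
  funext fun t => (hasDerivAt_trajC z₀ v t).deriv

lemma iteratedDeriv_trajC (z₀ : ℂ) (n : ℕ) (v : EuclideanSpace ℝ (Fin 2)) :
    iteratedDeriv n (trajC z₀ v) = trajC z₀ (P (z₀ ^ n) v) := by
  induction n generalizing v with
  | zero => simp [P_one]
  | succ n ih =>
    rw [iteratedDeriv_succ', deriv_trajC, ih]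
    rw [show z₀ ^ (n + 1) = z₀ ^ n * z₀ by ring, P_mul]

lemma curv_formula (a b : ℝ) (hb : 0 < b) (r₀ : EuclideanSpace ℝ (Fin 2)) (h₀ : r₀ ≠ 0)
    (t : ℝ) :
    curv (traj !![a, b; -b, a] r₀) 1 t
      = b / (Real.sqrt (a ^ 2 + b ^ 2) * ‖r₀‖) * Real.exp (-(a * t)) := by
  set z₀ : ℂ := a + b * Complex.I with hz₀
  have hz₀re : z₀.re = a := by simp [hz₀]
  have hz₀im : z₀.im = b := by simp [hz₀]
  have habs : ‖z₀‖ = Real.sqrt (a ^ 2 + b ^ 2) := by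
    rw [Complex.norm_def, Complex.normSq_apply, hz₀re, hz₀im]
    ring_nf
  have htraj : traj !![a, b; -b, a] r₀ = trajC z₀ r₀ := funext (traj_eq_s16 a b r₀)
  set w : ℂ := Complex.exp ((t : ℂ) * z₀) with hwdef
  have hwabs : ‖w‖ = Real.exp (a * t) := by
    rw [hwdef, Complex.norm_exp]
    congr 1
    simp [Complex.mul_re, hz₀re, hz₀im]
    ring
  have hr : ‖r₀‖ ≠ 0 := norm_ne_zero_iff.2 h₀
  have hwne : ‖w‖ ≠ 0 := by rw [hwabs]; positivity
  have hz₀ne : ‖z₀‖ ≠ 0 := by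
    rw [habs]
    have : (0:ℝ) < a ^ 2 + b ^ 2 := by positivity
    positivity
  have hf : ∀ k : ℕ, iteratedDeriv (k + 1) (trajC z₀ r₀) t = P (w * z₀ ^ (k + 1)) r₀ := by
    intro k
    rw [iteratedDeriv_trajC, trajC, ← P_mul]
  have hg0 : curvGS (traj !![a, b; -b, a] r₀) t 0 = P (w * z₀) r₀ := by
    rw [curvGS, htraj]
    have h := InnerProductSpace.gramSchmidt_bot (𝕜 := ℝ)
      (f := fun k : ℕ => iteratedDeriv (k + 1) (trajC z₀ r₀) t)
    rw [show ((⊥ : ℕ)) = 0 from rfl] at h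
    rw [h, hf 0, pow_one]
  have hnorm0 : ‖P (w * z₀) r₀‖ = ‖w‖ * ‖z₀‖ * ‖r₀‖ := by
    rw [norm_P, norm_mul]
  have hcoef : (inner ℝ (P (w * z₀) r₀) (P (w * z₀ ^ 2) r₀) : ℝ)
      = a * ((‖w‖ * ‖z₀‖ * ‖r₀‖) ^ 2) := by
    rw [inner_P]
    have h1 : (‖w‖) ^ 2 = w.re ^ 2 + w.im ^ 2 := by
      rw [Complex.sq_norm, Complex.normSq_apply]; ring
    have h2 : (‖z₀‖) ^ 2 = a ^ 2 + b ^ 2 := by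
      rw [Complex.sq_norm, Complex.normSq_apply, hz₀re, hz₀im]; ring
    rw [mul_pow, mul_pow, h1, h2]
    simp only [Complex.mul_re, Complex.mul_im, pow_two, Complex.mul_re, Complex.mul_im,
      hz₀re, hz₀im]
    ring
  have hg1 : curvGS (traj !![a, b; -b, a] r₀) t 1
      = P (w * z₀ ^ 2) r₀ - a • P (w * z₀) r₀ := by
    rw [curvGS, htraj, InnerProductSpace.gramSchmidt_def]
    rw [show Finset.Iio (1 : ℕ) = {0} from rfl, Finset.sum_singleton,
      Submodule.starProjection_singleton]
    have h := InnerProductSpace.gramSchmidt_bot (𝕜 := ℝ)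
      (f := fun k : ℕ => iteratedDeriv (k + 1) (trajC z₀ r₀) t)
    rw [show ((⊥ : ℕ)) = 0 from rfl] at h
    rw [h]
    have hf1 := hf 0
    have hf2 := hf 1
    norm_num at hf1 hf2 ⊢
    rw [hf1, hf2]
    rw [hcoef, hnorm0]
    congr 1
    rw [mul_div_assoc]
    rw [div_self (by positivity), mul_one]
  have hnorm1 : ‖P (w * z₀ ^ 2) r₀ - a • P (w * z₀) r₀‖
      = ‖w‖ * ‖z₀‖ * b * ‖r₀‖ := by
    rw [← P_smul, ← P_sub]
    have key : w * z₀ ^ 2 - (a : ℂ) * (w * z₀) = w * z₀ * ((b : ℂ) * Complex.I) := by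
      rw [hz₀]; ring
    rw [key, norm_P]
    simp only [norm_mul, Complex.norm_I, Complex.norm_real, Real.norm_eq_abs, abs_of_pos hb]
    ring
  rw [curv, hg0, hg1, hnorm0, hnorm1]
  rw [hwabs, habs]
  have he : Real.exp (a * t) ≠ 0 := Real.exp_ne_zero _
  have hs : Real.sqrt (a ^ 2 + b ^ 2) ≠ 0 := by rw [← habs]; exact hz₀ne
  rw [Real.exp_neg]
  field_simp

lemma tendsto_mul_atTop_of_pos {a : ℝ} (ha : 0 < a) :
    Tendsto (fun t : ℝ => a * t) atTop atTop :=
  (tendsto_const_mul_atTop_of_pos ha).2 tendsto_id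

lemma tendsto_mul_atBot_of_neg {a : ℝ} (ha : a < 0) :
    Tendsto (fun t : ℝ => a * t) atTop atBot := by
  have h := (tendsto_const_mul_atTop_of_pos (by linarith : (0:ℝ) < -a)).2
    (tendsto_id (α := ℝ))
  have h2 := tendsto_neg_atTop_atBot.comp h
  rw [show (Neg.neg ∘ fun x : ℝ => -a * id x) = fun t : ℝ => a * t by
    funext t; simp] at h2
  exact h2

lemma stable_of_nonpos {a b : ℝ} (ha : a ≤ 0) : IsStableZero !![a, b; -b, a] := by
  intro ε hε
  refine ⟨ε, hε, fun v hv t ht => ?_⟩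
  rw [norm_traj]
  calc Real.exp (a * t) * ‖v‖ ≤ 1 * ‖v‖ := by
        apply mul_le_mul_of_nonneg_right _ (norm_nonneg v)
        rw [Real.exp_le_one_iff]
        exact mul_nonpos_of_nonpos_of_nonneg ha ht
    _ = ‖v‖ := one_mul _
    _ < ε := hv

lemma asympStable_of_neg {a b : ℝ} (ha : a < 0) : IsAsympStableZero !![a, b; -b, a] := by
  refine ⟨stable_of_nonpos ha.le, 1, one_pos, fun v _ => ?_⟩
  rw [tendsto_zero_iff_norm_tendsto_zero]
  have : (fun t => ‖traj !![a, b; -b, a] v t‖) = fun t => Real.exp (a * t) * ‖v‖ :=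
    funext fun t => norm_traj a b v t
  rw [this]
  have h := (Real.tendsto_exp_atBot.comp (tendsto_mul_atBot_of_neg ha)).mul_const ‖v‖
  simpa using h

lemma not_asympStable_of_zero {b : ℝ} (r₀ : EuclideanSpace ℝ (Fin 2)) (h₀ : r₀ ≠ 0) :
    ¬ IsAsympStableZero !![(0:ℝ), b; -b, 0] := by
  rintro ⟨-, δ, hδ, h⟩
  have hr : (0:ℝ) < ‖r₀‖ := norm_pos_iff.2 h₀
  set v : EuclideanSpace ℝ (Fin 2) := (δ / (2 * ‖r₀‖)) • r₀ with hv
  have hvnorm : ‖v‖ = δ / 2 := by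
    rw [hv, norm_smul, Real.norm_eq_abs, abs_of_pos (by positivity)]
    field_simp
  have hvδ : ‖v‖ < δ := by rw [hvnorm]; linarith
  have htend := (h v hvδ).norm
  have : (fun t => ‖traj !![(0:ℝ), b; -b, 0] v t‖) = fun _ => ‖v‖ := by
    funext t
    rw [norm_traj]
    simp
  rw [this, norm_zero] at htend
  have := tendsto_nhds_unique htend tendsto_const_nhds
  rw [hvnorm] at this
  linarith

lemma not_stable_of_pos {a b : ℝ} (ha : 0 < a) (r₀ : EuclideanSpace ℝ (Fin 2))
    (h₀ : r₀ ≠ 0) : ¬ IsStableZero !![a, b; -b, a] := by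
  intro hS
  obtain ⟨δ, hδ, h⟩ := hS 1 one_pos
  have hr : (0:ℝ) < ‖r₀‖ := norm_pos_iff.2 h₀
  set v : EuclideanSpace ℝ (Fin 2) := (δ / (2 * ‖r₀‖)) • r₀ with hv
  have hvnorm : ‖v‖ = δ / 2 := by
    rw [hv, norm_smul, Real.norm_eq_abs, abs_of_pos (by positivity)]
    field_simp
  have hvδ : ‖v‖ < δ := by rw [hvnorm]; linarith
  have hvpos : (0:ℝ) < ‖v‖ := by rw [hvnorm]; linarith
  have htend : Tendsto (fun t => Real.exp (a * t) * ‖v‖) atTop atTop :=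
    (Real.tendsto_exp_atTop.comp (tendsto_mul_atTop_of_pos ha)).atTop_mul_const hvpos
  obtain ⟨t, ht1, ht0⟩ := ((htend.eventually_ge_atTop 1).and (eventually_ge_atTop 0)).exists
  have := h v hvδ t ht0
  rw [norm_traj] at this
  linarith

lemma not_tendsto_atTop_of_tendsto_zero {f : ℝ → ℝ}
    (h0 : Tendsto f atTop (nhds 0)) : ¬ Tendsto f atTop atTop := by
  intro hT
  obtain ⟨t, h1, h2⟩ := ((hT.eventually_ge_atTop 1).and
    (h0.eventually (gt_mem_nhds (by norm_num : (0:ℝ) < 1)))).exists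
  linarith

lemma not_tendsto_atTop_of_const {f : ℝ → ℝ} {C : ℝ} (hf : ∀ t, f t = C) :
    ¬ Tendsto f atTop atTop := by
  intro hT
  obtain ⟨t, h1⟩ := (hT.eventually_ge_atTop (C + 1)).exists
  rw [hf t] at h1
  linarith

lemma not_tendsto_zero_of_const {f : ℝ → ℝ} {C : ℝ} (hC : 0 < C) (hf : ∀ t, f t = C) :
    ¬ Tendsto f atTop (nhds 0) := by
  intro hT
  obtain ⟨t, h1⟩ := (hT.eventually (gt_mem_nhds hC)).exists
  rw [hf t] at h1
  linarith

/-- For `A = [[a, b], [−b, a]]`, `b > 0`, and any `r₀ ≠ 0`: the zero solution is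
asymptotically stable iff the first curvature of the trajectory tends to `+∞`; it is stable but
not asymptotically stable iff the curvature is a positive constant; and it is unstable iff the
curvature tends to `0`. -/
theorem stability_iff_curvature_rotation_block (a b : ℝ) (hb : 0 < b)
    (r₀ : EuclideanSpace ℝ (Fin 2)) (h₀ : r₀ ≠ 0) :
    (IsAsympStableZero !![a, b; -b, a] ↔
      Tendsto (curv (traj !![a, b; -b, a] r₀) 1) atTop atTop) ∧
    ((IsStableZero !![a, b; -b, a] ∧ ¬ IsAsympStableZero !![a, b; -b, a]) ↔
      ∃ C : ℝ, 0 < C ∧ ∀ t : ℝ, curv (traj !![a, b; -b, a] r₀) 1 t = C) ∧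
    (¬ IsStableZero !![a, b; -b, a] ↔
      Tendsto (curv (traj !![a, b; -b, a] r₀) 1) atTop (nhds 0)) := by
  have hr : (0:ℝ) < ‖r₀‖ := norm_pos_iff.2 h₀
  have hs : (0:ℝ) < Real.sqrt (a ^ 2 + b ^ 2) := Real.sqrt_pos.2 (by positivity)
  set κ := curv (traj !![a, b; -b, a] r₀) 1 with hκdef
  set C := b / (Real.sqrt (a ^ 2 + b ^ 2) * ‖r₀‖) with hCdef
  have hC : 0 < C := div_pos hb (mul_pos hs hr)
  have hκ : ∀ t, κ t = C * Real.exp (-(a * t)) := fun t => curv_formula a b hb r₀ h₀ t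
  have hκfun : κ = fun t => C * Real.exp (-a * t) := by
    funext t; rw [hκ t, neg_mul]
  rcases lt_trichotomy a 0 with ha | ha | ha
  · have hAS := asympStable_of_neg (b := b) ha
    have hT : Tendsto κ atTop atTop := by
      rw [hκfun]
      exact (tendsto_const_mul_atTop_of_pos hC).2
        (Real.tendsto_exp_atTop.comp (tendsto_mul_atTop_of_pos (by linarith)))
    refine ⟨⟨fun _ => hT, fun _ => hAS⟩, ⟨?_, ?_⟩, ⟨?_, ?_⟩⟩
    · rintro ⟨-, hnAS⟩; exact absurd hAS hnAS
    · rintro ⟨C', hC', hconst⟩; exact absurd hT (not_tendsto_atTop_of_const hconst)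
    · intro hnS; exact absurd hAS.1 hnS
    · intro h0; exact absurd hT (not_tendsto_atTop_of_tendsto_zero h0)
  · subst ha
    have hconst : ∀ t, κ t = C := by intro t; rw [hκ t]; norm_num
    have hS : IsStableZero !![0, b; -b, 0] := stable_of_nonpos le_rfl
    have hnAS := not_asympStable_of_zero (b := b) r₀ h₀
    refine ⟨⟨?_, ?_⟩, ⟨fun _ => ⟨C, hC, hconst⟩, fun _ => ⟨hS, hnAS⟩⟩, ⟨?_, ?_⟩⟩
    · intro hAS; exact absurd hAS hnAS
    · intro hT; exact absurd hT (not_tendsto_atTop_of_const hconst)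
    · intro hnS; exact absurd hS hnS
    · intro h0; exact absurd h0 (not_tendsto_zero_of_const hC hconst)
  · have hnS := not_stable_of_pos (b := b) ha r₀ h₀
    have h0 : Tendsto κ atTop (nhds 0) := by
      rw [hκfun]
      have h := (Real.tendsto_exp_atBot.comp
        (tendsto_mul_atBot_of_neg (by linarith : -a < 0))).const_mul C
      simpa using h
    refine ⟨⟨?_, ?_⟩, ⟨?_, ?_⟩, ⟨fun _ => h0, fun _ => hnS⟩⟩
    · intro hAS; exact absurd hAS.1 hnS
    · intro hT; exact absurd hT (not_tendsto_atTop_of_tendsto_zero h0)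
    · rintro ⟨hS, -⟩; exact absurd hS hnS
    · rintro ⟨C', hC', hconst⟩; exact absurd h0 (not_tendsto_zero_of_const hC' hconst)
end
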